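/- arXiv:1605.00856 — 5 statements merged into one kernel-verified Lean document; each statement's English description precedes it below -/
import Mathlib

section
/- Let (E,‖·‖_E) be a normed real vector space, let (M,d) be a metric space, let f : M → E be a function, and let c ∈ (0,∞) and α, β, γ ∈ [0,1] satisfy α ≤ β ≤ γ. Then |f|_{C^β(M,E)} ≤ max{ c^{α−β} · |f|_{C^{α,(c,∞)}(M,E)} , c^{γ−β} · |f|_{C^{γ,(0,c]}(M,E)} } and |f|_{C^β(M,E)} ≤ max{ c^{α−β} · |f|_{C^{α,[c,∞)}(M,E)} , c^{γ−β} · |f|_{C^{γ,(0,c)}(M,E)} } (all quantities taking values in [0,∞]). -/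
open ENNReal

/-- The Hölder seminorm (exponent `r`) of `f : M → E`, with the supremum taken
only over pairs of points whose distance lies in the set `A ⊆ (0,∞)`. -/
noncomputable def holderSemiA {M E : Type} [MetricSpace M]
    [NormedAddCommGroup E] (A : Set ℝ) (r : ℝ) (f : M → E) : ℝ≥0∞ :=
  ⨆ (x : M) (y : M) (_ : dist x y ∈ A),
    (‖f x - f y‖₊ : ℝ≥0∞) / ENNReal.ofReal (dist x y ^ r)

private lemma key_ineq (n : ℝ≥0∞) {t β r c : ℝ} (hc : 0 < c) (ht : 0 < t)
    (h : t ^ r ≤ c ^ (r - β) * t ^ β) :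
    n / ENNReal.ofReal (t ^ β) ≤ ENNReal.ofReal (c ^ (r - β)) * (n / ENNReal.ofReal (t ^ r)) := by
  set k := ENNReal.ofReal (c ^ (r - β)) with hk
  have hk0 : k ≠ 0 := by
    simp [hk, ENNReal.ofReal_pos, Real.rpow_pos_of_pos hc]
  have hktop : k ≠ ⊤ := ENNReal.ofReal_ne_top
  have hd : ENNReal.ofReal (t ^ r) ≤ k * ENNReal.ofReal (t ^ β) := by
    rw [hk, ← ENNReal.ofReal_mul (Real.rpow_pos_of_pos hc _).le]
    exact ENNReal.ofReal_le_ofReal h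
  have hinv : (k * ENNReal.ofReal (t ^ β))⁻¹ ≤ (ENNReal.ofReal (t ^ r))⁻¹ :=
    ENNReal.inv_le_inv.2 hd
  have hb : (ENNReal.ofReal (t ^ β))⁻¹ ≤ k * (ENNReal.ofReal (t ^ r))⁻¹ := by
    calc (ENNReal.ofReal (t ^ β))⁻¹
        = k * (k⁻¹ * (ENNReal.ofReal (t ^ β))⁻¹) := by
          rw [← mul_assoc, ENNReal.mul_inv_cancel hk0 hktop, one_mul]
      _ = k * (k * ENNReal.ofReal (t ^ β))⁻¹ := by
          rw [ENNReal.mul_inv (Or.inl hk0) (Or.inl hktop)]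
      _ ≤ k * (ENNReal.ofReal (t ^ r))⁻¹ := mul_le_mul_right hinv k
  calc n / ENNReal.ofReal (t ^ β) = n * (ENNReal.ofReal (t ^ β))⁻¹ := rfl
    _ ≤ n * (k * (ENNReal.ofReal (t ^ r))⁻¹) := mul_le_mul_right hb n
    _ = k * (n / ENNReal.ofReal (t ^ r)) := by rw [div_eq_mul_inv]; ring

private lemma main_aux {M E : Type} [MetricSpace M] [NormedAddCommGroup E]
    (f : M → E) {c : ℝ} (hc : 0 < c) {α β γ : ℝ} (hαβ : α ≤ β) (hβγ : β ≤ γ)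
    (A B : Set ℝ) (hAB : ∀ t : ℝ, 0 < t → t ∈ A ∨ t ∈ B)
    (hA : ∀ t ∈ A, c ≤ t) (hB : ∀ t ∈ B, 0 < t ∧ t ≤ c) :
    holderSemiA (Set.Ioi (0:ℝ)) β f
      ≤ max (ENNReal.ofReal (c ^ (α - β)) * holderSemiA A α f)
            (ENNReal.ofReal (c ^ (γ - β)) * holderSemiA B γ f) := by
  refine iSup_le fun x => iSup_le fun y => iSup_le fun ht => ?_
  have ht0 : 0 < dist x y := ht
  set t := dist x y with htdef
  rcases hAB t ht0 with h | h
  · have hct : c ≤ t := hA t h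
    have hreal : t ^ α ≤ c ^ (α - β) * t ^ β := by
      have h1 : t ^ (α - β) ≤ c ^ (α - β) :=
        Real.rpow_le_rpow_of_nonpos hc hct (by linarith)
      calc t ^ α = t ^ (α - β) * t ^ β := by
            rw [← Real.rpow_add ht0]; ring_nf
        _ ≤ c ^ (α - β) * t ^ β :=
            mul_le_mul_of_nonneg_right h1 (Real.rpow_nonneg ht0.le _)
    refine le_trans ?_ (le_max_left _ _)
    refine (key_ineq _ hc ht0 hreal).trans (mul_le_mul_right ?_ _)
    exact le_iSup₂_of_le x y (le_iSup_of_le h le_rfl)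
  · obtain ⟨ht0', htc⟩ := hB t h
    have hreal : t ^ γ ≤ c ^ (γ - β) * t ^ β := by
      have h1 : t ^ (γ - β) ≤ c ^ (γ - β) :=
        Real.rpow_le_rpow ht0.le htc (by linarith)
      calc t ^ γ = t ^ (γ - β) * t ^ β := by
            rw [← Real.rpow_add ht0]; ring_nf
        _ ≤ c ^ (γ - β) * t ^ β :=
            mul_le_mul_of_nonneg_right h1 (Real.rpow_nonneg ht0.le _)
    refine le_trans ?_ (le_max_right _ _)
    refine (key_ineq _ hc ht0 hreal).trans (mul_le_mul_right ?_ _)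
    exact le_iSup₂_of_le x y (le_iSup_of_le h le_rfl)

/-- **Lemma 2.1** (an interpolation type inequality for Hölder seminorms). -/
theorem lem_hoelderconv
    {M E : Type} [MetricSpace M] [NormedAddCommGroup E]
    (f : M → E) (c : ℝ) (hc : 0 < c)
    (α β γ : ℝ) (hα : α ∈ Set.Icc (0:ℝ) 1) (hβ : β ∈ Set.Icc (0:ℝ) 1)
    (hγ : γ ∈ Set.Icc (0:ℝ) 1) (hαβ : α ≤ β) (hβγ : β ≤ γ) :
    holderSemiA (Set.Ioi (0:ℝ)) β f
      ≤ max (ENNReal.ofReal (c ^ (α - β)) * holderSemiA (Set.Ioi c) α f)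
            (ENNReal.ofReal (c ^ (γ - β)) * holderSemiA (Set.Ioc 0 c) γ f)
    ∧
    holderSemiA (Set.Ioi (0:ℝ)) β f
      ≤ max (ENNReal.ofReal (c ^ (α - β)) * holderSemiA (Set.Ici c) α f)
            (ENNReal.ofReal (c ^ (γ - β)) * holderSemiA (Set.Ioo 0 c) γ f) := by
  constructor
  · refine main_aux f hc hαβ hβγ _ _ (fun t ht => ?_) (fun t ht => ht.le) (fun t ht => ⟨ht.1, ht.2⟩)
    by_cases h : t ≤ c
    · exact Or.inr ⟨ht, h⟩
    · exact Or.inl (lt_of_not_ge h)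
  · refine main_aux f hc hαβ hβγ _ _ (fun t ht => ?_) (fun t ht => ht) (fun t ht => ⟨ht.1, ht.2.le⟩)
    by_cases h : t < c
    · exact Or.inr ⟨ht, h⟩
    · exact Or.inl (le_of_not_gt h)
end

section
/- Let T ∈ (0,∞), let θ be a partition of [0,T], let α ∈ [0,1], let (E,‖·‖_E) be a normed real vector space, and let f : [0,T] → E be a function. Then ‖f − [f]_θ‖_{C([0,T],E)} ≤ (d_max(θ)/2)^α · |f|_{C^α([0,T],E)} (in [0,∞]). -/
open ENNReal

/-- The Hölder seminorm (exponent `r`) of `f` on `[0,T]`. -/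
noncomputable def holderSemiOn {E : Type} [NormedAddCommGroup E]
    (T : ℝ) (r : ℝ) (f : ℝ → E) : ℝ≥0∞ :=
  ⨆ (s : ℝ) (t : ℝ) (_ : s ∈ Set.Icc (0:ℝ) T) (_ : t ∈ Set.Icc (0:ℝ) T)
    (_ : s ≠ t), (‖f s - f t‖₊ : ℝ≥0∞) / ENNReal.ofReal (|s - t| ^ r)

/-- The supremum norm of `f` on `[0,T]`. -/
noncomputable def supNormOn {E : Type} [NormedAddCommGroup E]
    (T : ℝ) (f : ℝ → E) : ℝ≥0∞ :=
  ⨆ (t : ℝ) (_ : t ∈ Set.Icc (0:ℝ) T), (‖f t‖₊ : ℝ≥0∞)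

/-- Maximal mesh size of the partition with nodes `θ 0 < θ 1 < … < θ K`. -/
noncomputable def dMax (K : ℕ) (θ : ℕ → ℝ) : ℝ := ⨆ j : Fin K, (θ (j + 1) - θ j)

/-!
On a cell `[x, y]` of length `h`, write `t = x + a = y - b`. The interpolation error at `t` is
`(b/h) (f t - f x) + (a/h) (f t - f y)`, so its norm is at most
`|f|_α ((b/h) a^α + (a/h) b^α)`. This is a convex combination of values of the concave function
`s ↦ s^α`, hence at most its value `((b a + a b)/h)^α = (2ab/h)^α` at the barycentre, and
`2ab/h ≤ h/2` by AM-GM.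
-/

lemma div_mul_rpow_add_div_mul_rpow_le {α a b h : ℝ} (hα0 : 0 ≤ α) (hα1 : α ≤ 1)
    (ha : 0 ≤ a) (hb : 0 ≤ b) (hab : a + b = h) (hh : 0 < h) :
    b / h * a ^ α + a / h * b ^ α ≤ (h / 2) ^ α := by
  have hsum : b / h + a / h = 1 := by field_simp; linarith
  have hconc := (Real.concaveOn_rpow hα0 hα1).2 (Set.mem_Ici.2 ha) (Set.mem_Ici.2 hb)
    (div_nonneg hb hh.le) (div_nonneg ha hh.le) hsum
  simp only [smul_eq_mul] at hconc
  refine hconc.trans (Real.rpow_le_rpow (by positivity) ?_ hα0)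
  rw [div_mul_eq_mul_div, div_mul_eq_mul_div, ← add_div, div_le_div_iff₀ hh two_pos]
  nlinarith [sq_nonneg (a - b)]

lemma norm_sub_affine_interpolation_le {E : Type*} [SeminormedAddCommGroup E] [NormedSpace ℝ E]
    {x y t α C : ℝ} (hxt : x ≤ t) (hty : t ≤ y) (hxy : x < y) (hα0 : 0 ≤ α) (hα1 : α ≤ 1)
    (hC : 0 ≤ C) {u v w : E} (hu : ‖v - u‖ ≤ C * (t - x) ^ α)
    (hw : ‖v - w‖ ≤ C * (y - t) ^ α) :
    ‖v - (((y - t) / (y - x)) • u + ((t - x) / (y - x)) • w)‖ ≤ C * ((y - x) / 2) ^ α := by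
  have hh : 0 < y - x := sub_pos.2 hxy
  have hb : 0 ≤ (y - t) / (y - x) := div_nonneg (by linarith) hh.le
  have ha : 0 ≤ (t - x) / (y - x) := div_nonneg (by linarith) hh.le
  have hdecomp : v - (((y - t) / (y - x)) • u + ((t - x) / (y - x)) • w)
      = ((y - t) / (y - x)) • (v - u) + ((t - x) / (y - x)) • (v - w) := by
    have hsum : (y - t) / (y - x) + (t - x) / (y - x) = 1 := by field_simp; ring
    conv_lhs => rw [← one_smul ℝ v, ← hsum, add_smul]
    rw [smul_sub, smul_sub]
    abel
  calc ‖v - (((y - t) / (y - x)) • u + ((t - x) / (y - x)) • w)‖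
      ≤ (y - t) / (y - x) * ‖v - u‖ + (t - x) / (y - x) * ‖v - w‖ := by
        rw [hdecomp]
        refine (norm_add_le _ _).trans_eq ?_
        rw [norm_smul, norm_smul, Real.norm_of_nonneg hb, Real.norm_of_nonneg ha]
    _ ≤ (y - t) / (y - x) * (C * (t - x) ^ α) + (t - x) / (y - x) * (C * (y - t) ^ α) := by
        gcongr
    _ = C * ((y - t) / (y - x) * (t - x) ^ α + (t - x) / (y - x) * (y - t) ^ α) := by ring
    _ ≤ C * ((y - x) / 2) ^ α := by
        gcongr
        exact div_mul_rpow_add_div_mul_rpow_le hα0 hα1 (by linarith) (by linarith) (by ring) hh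

lemma norm_sub_le_toReal_holderSemiOn_mul {E : Type} [NormedAddCommGroup E] {T α : ℝ}
    {f : ℝ → E} (hf : holderSemiOn T α f ≠ ⊤) {s u : ℝ} (hs : s ∈ Set.Icc 0 T)
    (hu : u ∈ Set.Icc 0 T) :
    ‖f s - f u‖ ≤ (holderSemiOn T α f).toReal * |s - u| ^ α := by
  rcases eq_or_ne s u with rfl | hsu
  · simpa using mul_nonneg ENNReal.toReal_nonneg (Real.rpow_nonneg le_rfl α)
  have hpos : 0 < |s - u| ^ α := Real.rpow_pos_of_pos (abs_pos.2 (sub_ne_zero.2 hsu)) α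
  have hquot : (‖f s - f u‖₊ : ℝ≥0∞) / ENNReal.ofReal (|s - u| ^ α) ≤ holderSemiOn T α f :=
    le_iSup_of_le s <| le_iSup_of_le u <| le_iSup_of_le hs <| le_iSup_of_le hu <|
      le_iSup_of_le hsu le_rfl
  rw [ENNReal.div_le_iff (by simpa using hpos) ENNReal.ofReal_ne_top] at hquot
  have := ENNReal.toReal_mono (ENNReal.mul_ne_top hf ENNReal.ofReal_ne_top) hquot
  rwa [ENNReal.toReal_mul, ENNReal.toReal_ofReal hpos.le, ENNReal.coe_toReal, coe_nnnorm] at this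

lemma exists_lt_mem_Icc_succ (θ : ℕ → ℝ) {K : ℕ} (hK : 1 ≤ K) {t : ℝ} (h0 : θ 0 ≤ t)
    (hKt : t ≤ θ K) : ∃ j < K, t ∈ Set.Icc (θ j) (θ (j + 1)) := by
  induction K with
  | zero => omega
  | succ n ih =>
    rcases Nat.eq_zero_or_pos n with rfl | hn
    · exact ⟨0, Nat.one_pos, h0, hKt⟩
    by_cases htn : t ≤ θ n
    · obtain ⟨j, hj, htj⟩ := ih hn htn
      exact ⟨j, by omega, htj⟩
    · exact ⟨n, by omega, (not_le.1 htn).le, hKt⟩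

lemma sub_le_dMax {K : ℕ} (θ : ℕ → ℝ) {j : ℕ} (hj : j < K) : θ (j + 1) - θ j ≤ dMax K θ :=
  le_ciSup (f := fun i : Fin K => θ (i + 1) - θ i) (Set.finite_range _).bddAbove ⟨j, hj⟩

theorem lem_estNaffine_general
    {E : Type} [NormedAddCommGroup E] [NormedSpace ℝ E]
    (T : ℝ) (α : ℝ) (hα : α ∈ Set.Icc (0:ℝ) 1)
    (K : ℕ) (hK : 1 ≤ K) (θ : ℕ → ℝ)
    (hθ0 : θ 0 = 0) (hθK : θ K = T)
    (hθmono : ∀ j, j < K → θ j < θ (j + 1))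
    (f g : ℝ → E)
    (hg : ∀ j, j < K → ∀ s ∈ Set.Icc (θ j) (θ (j + 1)),
        g s = ((θ (j + 1) - s) / (θ (j + 1) - θ j)) • f (θ j)
            + ((s - θ j) / (θ (j + 1) - θ j)) • f (θ (j + 1))) :
    supNormOn T (fun t => f t - g t)
      ≤ ENNReal.ofReal ((dMax K θ / 2) ^ α) * holderSemiOn T α f := by
  have hmono : MonotoneOn θ (Set.Iic K) := (strictMonoOn_Iic_of_lt_succ hθmono).monotoneOn
  have hnode : ∀ i ≤ K, θ i ∈ Set.Icc 0 T := fun i hi =>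
    ⟨hθ0 ▸ hmono (Nat.zero_le K) hi (Nat.zero_le i), hθK ▸ hmono hi (Set.mem_Iic.2 le_rfl) hi⟩
  refine iSup₂_le fun t ht => ?_
  obtain ⟨j, hj, htj⟩ := exists_lt_mem_Icc_succ θ hK (hθ0 ▸ ht.1) (hθK ▸ ht.2)
  have hcell : 0 < θ (j + 1) - θ j := sub_pos.2 (hθmono j hj)
  have hfac : 0 < (dMax K θ / 2) ^ α :=
    Real.rpow_pos_of_pos (by linarith [sub_le_dMax θ hj]) α
  by_cases hf : holderSemiOn T α f = ⊤
  · simp [hf, ENNReal.mul_top, hfac]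
  set C := (holderSemiOn T α f).toReal
  have hreal : ‖f t - g t‖ ≤ C * (dMax K θ / 2) ^ α := by
    rw [hg j hj t htj]
    refine (norm_sub_affine_interpolation_le (C := C) htj.1 htj.2 (hθmono j hj) hα.1 hα.2
      ENNReal.toReal_nonneg ?_ ?_).trans ?_
    · simpa [abs_of_nonneg (sub_nonneg.2 htj.1)] using
        norm_sub_le_toReal_holderSemiOn_mul hf ht (hnode j hj.le)
    · simpa [abs_sub_comm t, abs_of_nonneg (sub_nonneg.2 htj.2)] using
        norm_sub_le_toReal_holderSemiOn_mul hf ht (hnode (j + 1) hj)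
    · gcongr
      exacts [hα.1, sub_le_dMax θ hj]
  calc (‖f t - g t‖₊ : ℝ≥0∞) = ENNReal.ofReal ‖f t - g t‖ := (ofReal_norm _).symm
    _ ≤ ENNReal.ofReal ((dMax K θ / 2) ^ α * C) := ENNReal.ofReal_le_ofReal (by linarith)
    _ = ENNReal.ofReal ((dMax K θ / 2) ^ α) * holderSemiOn T α f := by
        rw [ENNReal.ofReal_mul hfac.le, ENNReal.ofReal_toReal hf]

/-- **Lemma 2.2** (approximation error for piecewise affine linear
interpolation): `‖f − [f]_θ‖_{C([0,T],E)} ≤ (d_max(θ)/2)^α |f|_{C^α([0,T],E)}`,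
where `g = [f]_θ` is the piecewise affine linear interpolation of `f` at the
nodes of the partition `θ`. -/
theorem lem_estNaffine
    {E : Type} [NormedAddCommGroup E] [NormedSpace ℝ E]
    (T : ℝ) (hT : 0 < T) (α : ℝ) (hα : α ∈ Set.Icc (0:ℝ) 1)
    (K : ℕ) (hK : 1 ≤ K) (θ : ℕ → ℝ)
    (hθ0 : θ 0 = 0) (hθK : θ K = T)
    (hθmono : ∀ j, j < K → θ j < θ (j + 1))
    (f g : ℝ → E)
    (hg : ∀ j, j < K → ∀ s ∈ Set.Icc (θ j) (θ (j + 1)),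
        g s = ((θ (j + 1) - s) / (θ (j + 1) - θ j)) • f (θ j)
            + ((s - θ j) / (θ (j + 1) - θ j)) • f (θ (j + 1))) :
    supNormOn T (fun t => f t - g t)
      ≤ ENNReal.ofReal ((dMax K θ / 2) ^ α) * holderSemiOn T α f :=
  lem_estNaffine_general T α hα K hK θ hθ0 hθK hθmono f g hg
end

section
/- Let (E,‖·‖_E) be a normed real vector space, let T, c ∈ (0,∞), α ∈ [0,1], let θ = {θ_0, θ_1, …, θ_K} be a partition of [0,T] with 0 = θ_0 < θ_1 < … < θ_K = T, and let f : [0,T] → E be a function. Then |[f]_θ|_{C^{α,(0,c]}([0,T],E)} ≤ (c^{1−α} / d_min(θ)) · sup_{j∈{1,…,K}} ‖f(θ_j) − f(θ_{j−1})‖_E. -/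
/-! On each cell `[θ j, θ (j + 1)]` the interpolant is affine with slope
`(f (θ (j + 1)) - f (θ j)) / (θ (j + 1) - θ j)`, hence Lipschitz there with the common constant
`L = max_j ‖f (θ (j + 1)) - f (θ j)‖ / dMin K θ`. Lipschitz bounds with a common constant glue
across adjacent intervals, so `g` is `L`-Lipschitz on `[0, T]`, and for `0 < |s - t| ≤ c`
we have `|s - t| = |s - t| ^ α * |s - t| ^ (1 - α) ≤ |s - t| ^ α * c ^ (1 - α)`. -/

open ENNReal

/-- The Hölder seminorm (exponent `r`) of `f` on `[0,T]`, with the supremum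
taken only over pairs of points whose distance lies in `A ⊆ (0,∞)`. -/
noncomputable def holderSemiOnA {E : Type} [NormedAddCommGroup E]
    (T : ℝ) (A : Set ℝ) (r : ℝ) (f : ℝ → E) : ℝ≥0∞ :=
  ⨆ (s : ℝ) (t : ℝ) (_ : s ∈ Set.Icc (0:ℝ) T) (_ : t ∈ Set.Icc (0:ℝ) T)
    (_ : |s - t| ∈ A), (‖f s - f t‖₊ : ℝ≥0∞) / ENNReal.ofReal (|s - t| ^ r)

/-- Minimal mesh size of the partition with nodes `θ 0 < θ 1 < … < θ K`. -/
noncomputable def dMin (K : ℕ) (θ : ℕ → ℝ) : ℝ := ⨅ j : Fin K, (θ (j + 1) - θ j)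

open Set NNReal

theorem dMin_le {K j : ℕ} (θ : ℕ → ℝ) (hj : j < K) : dMin K θ ≤ θ (j + 1) - θ j :=
  Finite.ciInf_le (fun i : Fin K => θ (i + 1) - θ i) ⟨j, hj⟩

theorem dMin_pos {K : ℕ} {θ : ℕ → ℝ} (hK : 1 ≤ K) (hθ : ∀ j < K, θ j < θ (j + 1)) :
    0 < dMin K θ := by
  have : Nonempty (Fin K) := ⟨⟨0, hK⟩⟩
  obtain ⟨j, hj⟩ := exists_eq_ciInf_of_finite (f := fun i : Fin K => θ (i + 1) - θ i)
  rw [dMin, ← hj]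
  exact sub_pos.mpr (hθ j j.isLt)

section Lipschitz

variable {X : Type*} [PseudoMetricSpace X] {g : ℝ → X} {L : ℝ≥0}

theorem LipschitzOnWith.Icc_union_Icc {a b c : ℝ} (h₁ : LipschitzOnWith L g (Icc a b))
    (h₂ : LipschitzOnWith L g (Icc b c)) : LipschitzOnWith L g (Icc a c) := by
  refine LipschitzOnWith.of_dist_le_mul fun x hx y hy => ?_
  wlog hxy : x ≤ y generalizing x y
  · rw [dist_comm, dist_comm x]
    exact this y hy x hx (le_of_not_ge hxy)
  rcases le_or_gt y b with hyb | hby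
  · exact h₁.dist_le_mul x ⟨hx.1, hxy.trans hyb⟩ y ⟨hx.1.trans hxy, hyb⟩
  rcases le_or_gt b x with hbx | hxb
  · exact h₂.dist_le_mul x ⟨hbx, hxy.trans hy.2⟩ y ⟨hbx.trans hxy, hy.2⟩
  have hb₁ : b ∈ Icc a b := ⟨hx.1.trans hxb.le, le_rfl⟩
  have hb₂ : b ∈ Icc b c := ⟨le_rfl, hby.le.trans hy.2⟩
  calc dist (g x) (g y) ≤ dist (g x) (g b) + dist (g b) (g y) := dist_triangle _ _ _
    _ ≤ L * dist x b + L * dist b y :=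
      add_le_add (h₁.dist_le_mul x ⟨hx.1, hxb.le⟩ b hb₁) (h₂.dist_le_mul b hb₂ y ⟨hby.le, hy.2⟩)
    _ = L * dist x y := by
      rw [Real.dist_eq, Real.dist_eq, Real.dist_eq, abs_of_neg (sub_neg.mpr hxb),
        abs_of_neg (sub_neg.mpr hby), abs_of_nonpos (sub_nonpos.mpr hxy)]
      ring

theorem lipschitzOnWith_Icc_of_consecutive {θ : ℕ → ℝ} {n : ℕ}
    (h : ∀ j < n, LipschitzOnWith L g (Icc (θ j) (θ (j + 1)))) :
    LipschitzOnWith L g (Icc (θ 0) (θ n)) := by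
  induction n with
  | zero =>
    rw [Icc_self]
    exact .of_dist_le_mul fun x hx y hy => by simp_all
  | succ n ih =>
    exact (ih fun j hj => h j (hj.trans n.lt_succ_self)).Icc_union_Icc (h n n.lt_succ_self)

end Lipschitz

section Interpolation

variable {E : Type*} [SeminormedAddCommGroup E] [NormedSpace ℝ E] {g : ℝ → E} {a b : ℝ} {x y : E}

theorem affine_interpolation_sub (hab : a < b)
    (hg : ∀ s ∈ Icc a b, g s = ((b - s) / (b - a)) • x + ((s - a) / (b - a)) • y)
    {s t : ℝ} (hs : s ∈ Icc a b) (ht : t ∈ Icc a b) :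
    g s - g t = ((s - t) / (b - a)) • (y - x) := by
  have : b - a ≠ 0 := sub_ne_zero.mpr hab.ne'
  rw [hg s hs, hg t ht]
  match_scalars <;> field_simp <;> ring

theorem lipschitzOnWith_affine_interpolation {L : ℝ≥0} (hab : a < b)
    (hL : ‖y - x‖ / (b - a) ≤ L)
    (hg : ∀ s ∈ Icc a b, g s = ((b - s) / (b - a)) • x + ((s - a) / (b - a)) • y) :
    LipschitzOnWith L g (Icc a b) := by
  refine LipschitzOnWith.of_dist_le_mul fun s hs t ht => ?_
  rw [dist_eq_norm, affine_interpolation_sub hab hg hs ht, norm_smul, Real.norm_eq_abs,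
    abs_div, abs_of_pos (sub_pos.mpr hab), Real.dist_eq]
  calc |s - t| / (b - a) * ‖y - x‖ = ‖y - x‖ / (b - a) * |s - t| := by ring
    _ ≤ L * |s - t| := by gcongr

end Interpolation

theorem holderSemiOnA_le_of_lipschitzOnWith {E : Type} [NormedAddCommGroup E] {T c α : ℝ}
    {L : ℝ≥0} {g : ℝ → E} (hα : α ≤ 1) (hg : LipschitzOnWith L g (Icc 0 T)) :
    holderSemiOnA T (Ioc 0 c) α g ≤ ENNReal.ofReal (L * c ^ (1 - α)) := by
  simp only [holderSemiOnA, iSup_le_iff]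
  rintro s t hs ht ⟨hδ, hδc⟩
  have hc : 0 ≤ c := hδ.le.trans hδc
  refine ENNReal.div_le_of_le_mul ?_
  rw [← enorm_eq_nnnorm, ← ofReal_norm, ← ENNReal.ofReal_mul (by positivity)]
  refine ENNReal.ofReal_le_ofReal ?_
  calc ‖g s - g t‖ ≤ L * |s - t| := by simpa using hg.norm_sub_le hs ht
    _ = L * (|s - t| ^ α * |s - t| ^ (1 - α)) := by
      rw [← Real.rpow_add hδ, add_sub_cancel, Real.rpow_one]
    _ ≤ L * (|s - t| ^ α * c ^ (1 - α)) := by gcongr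
    _ = L * c ^ (1 - α) * |s - t| ^ α := by ring

theorem lem_estcagrid_general
    {E : Type} [NormedAddCommGroup E] [NormedSpace ℝ E]
    (T c : ℝ) (α : ℝ) (hα : α ∈ Set.Icc (0:ℝ) 1)
    (K : ℕ) (hK : 1 ≤ K) (θ : ℕ → ℝ)
    (hθ0 : θ 0 = 0) (hθK : θ K = T)
    (hθmono : ∀ j, j < K → θ j < θ (j + 1))
    (f g : ℝ → E)
    (hg : ∀ j, j < K → ∀ s ∈ Set.Icc (θ j) (θ (j + 1)),
        g s = ((θ (j + 1) - s) / (θ (j + 1) - θ j)) • f (θ j)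
            + ((s - θ j) / (θ (j + 1) - θ j)) • f (θ (j + 1))) :
    holderSemiOnA T (Set.Ioc 0 c) α g
      ≤ ENNReal.ofReal (c ^ (1 - α) / dMin K θ) *
          ⨆ j : Fin K, (‖f (θ (j + 1)) - f (θ j)‖₊ : ℝ≥0∞) := by
  have : Nonempty (Fin K) := ⟨⟨0, hK⟩⟩
  obtain ⟨j₁, hj₁⟩ := Finite.exists_max fun j : Fin K => ‖f (θ (j + 1)) - f (θ j)‖
  set m := ‖f (θ (j₁ + 1)) - f (θ j₁)‖
  have hd := dMin_pos hK hθmono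
  let L : ℝ≥0 := ⟨m / dMin K θ, by positivity⟩
  have hlip : LipschitzOnWith L g (Icc 0 T) := by
    rw [← hθ0, ← hθK]
    exact lipschitzOnWith_Icc_of_consecutive fun j hj =>
      lipschitzOnWith_affine_interpolation (hθmono j hj)
        (div_le_div₀ (norm_nonneg _) (hj₁ ⟨j, hj⟩) hd (dMin_le θ hj)) (hg j hj)
  calc holderSemiOnA T (Ioc 0 c) α g ≤ ENNReal.ofReal (L * c ^ (1 - α)) :=
        holderSemiOnA_le_of_lipschitzOnWith hα.2 hlip
    _ = ENNReal.ofReal (c ^ (1 - α) / dMin K θ) * ‖f (θ (j₁ + 1)) - f (θ j₁)‖₊ := by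
      rw [← enorm_eq_nnnorm, ← ofReal_norm, ← ENNReal.ofReal_mul' (norm_nonneg _)]
      congr 1
      change m / dMin K θ * c ^ (1 - α) = c ^ (1 - α) / dMin K θ * m
      ring
    _ ≤ _ := by gcongr; exact le_iSup (fun j : Fin K => (‖f (θ (j + 1)) - f (θ j)‖₊ : ℝ≥0∞)) j₁

/-- **Lemma 2.4**: small-scale Hölder estimate for the piecewise affine linear
interpolation `g = [f]_θ` of `f` at the nodes of the partition `θ`. -/
theorem lem_estcagrid
    {E : Type} [NormedAddCommGroup E] [NormedSpace ℝ E]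
    (T c : ℝ) (hT : 0 < T) (hc : 0 < c) (α : ℝ) (hα : α ∈ Set.Icc (0:ℝ) 1)
    (K : ℕ) (hK : 1 ≤ K) (θ : ℕ → ℝ)
    (hθ0 : θ 0 = 0) (hθK : θ K = T)
    (hθmono : ∀ j, j < K → θ j < θ (j + 1))
    (f g : ℝ → E)
    (hg : ∀ j, j < K → ∀ s ∈ Set.Icc (θ j) (θ (j + 1)),
        g s = ((θ (j + 1) - s) / (θ (j + 1) - θ j)) • f (θ j)
            + ((s - θ j) / (θ (j + 1) - θ j)) • f (θ (j + 1))) :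
    holderSemiOnA T (Set.Ioc 0 c) α g
      ≤ ENNReal.ofReal (c ^ (1 - α) / dMin K θ) *
          ⨆ j : Fin K, (‖f (θ (j + 1)) - f (θ j)‖₊ : ℝ≥0∞) :=
  lem_estcagrid_general T c α hα K hK θ hθ0 hθK hθmono f g hg
end

section
/- Let (E,‖·‖_E) be a normed real vector space, let T ∈ (0,∞), α ∈ [0,1], let θ be a partition of [0,T], and let f : [0,T] → E be a function. Then the piecewise affine linear interpolation [f]_θ satisfies |[f]_θ|_{C^α([0,T],E)} ≤ |f|_{C^α([0,T],E)} (in [0,∞]). -/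
/-!
On a segment `[a, b]` of the partition the interpolant is affine, so for a fixed vector `v` the
function `s ↦ ‖[f]_θ(s) - v‖` is convex there, while `s ↦ C |s - t|^α` is concave on `[a, b]` as
long as `t ∉ (a, b)`. Hence a Hölder bound with constant `C` at the two nodes `a, b` propagates to
the whole segment. Applying this first with `v = f(θᵢ)` (a node against an arbitrary point) and then
with `v = [f]_θ(t)` handles points in different segments. For `s, t` in one segment,
`[f]_θ(s) - [f]_θ(t) = ((s - t) / (b - a)) (f(b) - f(a))`, and `u ≤ u^α` for `u = |s - t| / (b - a) ≤ 1`.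
-/

open ENNReal NNReal Set

theorem holderSemiOn_le_coe_iff {E : Type} [NormedAddCommGroup E] {T r : ℝ} {f : ℝ → E}
    {C : ℝ≥0} :
    holderSemiOn T r f ≤ C ↔ ∀ s ∈ Icc 0 T, ∀ t ∈ Icc 0 T, ‖f s - f t‖ ≤ C * |s - t| ^ r := by
  have quotient_le_iff {s t : ℝ} (hst : s ≠ t) :
      (‖f s - f t‖₊ : ℝ≥0∞) / ENNReal.ofReal (|s - t| ^ r) ≤ C ↔
        ‖f s - f t‖ ≤ C * |s - t| ^ r := by
    have hpos : 0 < |s - t| ^ r := Real.rpow_pos_of_pos (abs_pos.2 (sub_ne_zero.2 hst)) r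
    rw [ENNReal.div_le_iff (ENNReal.ofReal_pos.2 hpos).ne' ENNReal.ofReal_ne_top,
      ← ENNReal.ofReal_coe_nnreal, ← ENNReal.ofReal_coe_nnreal, ← ENNReal.ofReal_mul C.coe_nonneg,
      ENNReal.ofReal_le_ofReal_iff (by positivity), coe_nnnorm]
  simp only [holderSemiOn, iSup_le_iff]
  constructor
  · intro h s hs t ht
    rcases eq_or_ne s t with rfl | hst
    · rw [sub_self, norm_zero]
      positivity
    · exact (quotient_le_iff hst).1 (h s t hs ht hst)
  · exact fun h s t hs ht hst ↦ (quotient_le_iff hst).2 (h s hs t ht)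

section AffineInterp

variable {E : Type} [NormedAddCommGroup E] [NormedSpace ℝ E]

noncomputable def affineInterp (a b : ℝ) (x y : E) (s : ℝ) : E :=
  ((b - s) / (b - a)) • x + ((s - a) / (b - a)) • y

variable {a b s t C α : ℝ} {x y : E}

theorem norm_affineInterp_sub_le (hab : a < b) (hs : s ∈ Icc a b) (ht : t ≤ a ∨ b ≤ t)
    (hα : α ∈ Icc (0 : ℝ) 1) (hC : 0 ≤ C) {v : E} (hx : ‖x - v‖ ≤ C * |a - t| ^ α)
    (hy : ‖y - v‖ ≤ C * |b - t| ^ α) :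
    ‖affineInterp a b x y s - v‖ ≤ C * |s - t| ^ α := by
  have hba : b - a ≠ 0 := (sub_pos.2 hab).ne'
  set l := (b - s) / (b - a) with hl_def
  set m := (s - a) / (b - a) with hm_def
  have hl : 0 ≤ l := div_nonneg (by linarith [hs.2]) (by linarith)
  have hm : 0 ≤ m := div_nonneg (by linarith [hs.1]) (by linarith)
  have hlm : l + m = 1 := by rw [hl_def, hm_def]; field_simp; ring
  have hcomb : l * |a - t| + m * |b - t| = |s - t| := by
    have hscal : l * (a - t) + m * (b - t) = s - t := by rw [hl_def, hm_def]; field_simp; ring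
    rcases ht with ht | ht
    · rw [abs_of_nonneg (by linarith), abs_of_nonneg (by linarith),
        abs_of_nonneg (by linarith [hs.1]), hscal]
    · rw [abs_of_nonpos (by linarith), abs_of_nonpos (by linarith),
        abs_of_nonpos (by linarith [hs.2]), ← hscal]
      ring
  have hsplit : affineInterp a b x y s - v = l • (x - v) + m • (y - v) := by
    rw [smul_sub, smul_sub, sub_add_sub_comm, ← add_smul, hlm, one_smul]
    rfl
  calc ‖affineInterp a b x y s - v‖ ≤ l * ‖x - v‖ + m * ‖y - v‖ := by
        rw [hsplit]
        refine (norm_add_le _ _).trans_eq ?_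
        rw [norm_smul, norm_smul, Real.norm_of_nonneg hl, Real.norm_of_nonneg hm]
    _ ≤ l * (C * |a - t| ^ α) + m * (C * |b - t| ^ α) := by gcongr
    _ = C * (l * |a - t| ^ α + m * |b - t| ^ α) := by ring
    _ ≤ C * |s - t| ^ α := by
        rw [← hcomb]
        refine mul_le_mul_of_nonneg_left ?_ hC
        exact (Real.concaveOn_rpow hα.1 hα.2).2 (abs_nonneg (a - t)) (abs_nonneg (b - t)) hl hm hlm

theorem norm_affineInterp_sub_affineInterp_le (hab : a < b) (hs : s ∈ Icc a b) (ht : t ∈ Icc a b)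
    (hα : α ≤ 1) (hC : 0 ≤ C) (hxy : ‖x - y‖ ≤ C * (b - a) ^ α) :
    ‖affineInterp a b x y s - affineInterp a b x y t‖ ≤ C * |s - t| ^ α := by
  have hba : 0 < b - a := sub_pos.2 hab
  set u := |s - t| / (b - a)
  have hu1 : u ≤ 1 :=
    (div_le_one hba).2 (abs_sub_le_iff.2 ⟨by linarith [hs.2, ht.1], by linarith [hs.1, ht.2]⟩)
  have hdiff : affineInterp a b x y s - affineInterp a b x y t = ((t - s) / (b - a)) • (x - y) := by
    simp only [affineInterp]
    match_scalars <;> ring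
  calc ‖affineInterp a b x y s - affineInterp a b x y t‖ = u * ‖x - y‖ := by
        rw [hdiff, norm_smul, Real.norm_eq_abs, abs_div, abs_of_pos hba, abs_sub_comm]
    _ ≤ u * (C * (b - a) ^ α) := by gcongr
    _ ≤ u ^ α * (C * (b - a) ^ α) := by
        gcongr
        exact Real.self_le_rpow_of_le_one (by positivity) hu1 hα
    _ = C * |s - t| ^ α := by
        rw [Real.div_rpow (abs_nonneg _) hba.le]
        field_simp

end AffineInterp

theorem exists_mem_Icc_succ_of_mem_Icc {K : ℕ} {θ : ℕ → ℝ} (hK : 1 ≤ K) {s : ℝ}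
    (hs : s ∈ Icc (θ 0) (θ K)) : ∃ i < K, s ∈ Icc (θ i) (θ (i + 1)) := by
  have hlast : s ≤ θ (K - 1 + 1) := by rw [Nat.sub_add_cancel hK]; exact hs.2
  have hex : ∃ n, s ≤ θ (n + 1) := ⟨K - 1, hlast⟩
  refine ⟨Nat.find hex, ?_, ?_, Nat.find_spec hex⟩
  · have := Nat.find_min' hex hlast
    omega
  · rcases Nat.eq_zero_or_eq_succ_pred (Nat.find hex) with h | h
    · rw [h]; exact hs.1
    · rw [h]
      exact (not_le.1 (Nat.find_min hex (m := (Nat.find hex).pred) (by omega))).le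

section Partition

variable {E : Type} [NormedAddCommGroup E] [NormedSpace ℝ E] {K : ℕ} {θ : ℕ → ℝ}
  (hθ : ∀ j < K, θ j < θ (j + 1))
include hθ

theorem partition_mem_Icc {i : ℕ} (hi : i ≤ K) : θ i ∈ Icc (θ 0) (θ K) :=
  have hmono := (strictMonoOn_Iic_of_lt_succ hθ).monotoneOn
  ⟨hmono (Nat.zero_le K) hi (Nat.zero_le i), hmono hi (le_refl K) hi⟩

variable {f g : ℝ → E} {C α : ℝ}
  (hg : ∀ j < K, ∀ s ∈ Icc (θ j) (θ (j + 1)),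
    g s = affineInterp (θ j) (θ (j + 1)) (f (θ j)) (f (θ (j + 1))) s)
  (hf : ∀ s ∈ Icc (θ 0) (θ K), ∀ t ∈ Icc (θ 0) (θ K), ‖f s - f t‖ ≤ C * |s - t| ^ α)
include hg hf

theorem norm_node_sub_interp_le (hK : 1 ≤ K) (hα : α ∈ Icc (0 : ℝ) 1) (hC : 0 ≤ C) {i : ℕ}
    (hi : i ≤ K) {t : ℝ} (ht : t ∈ Icc (θ 0) (θ K)) :
    ‖f (θ i) - g t‖ ≤ C * |θ i - t| ^ α := by
  obtain ⟨j, hj, htj⟩ := exists_mem_Icc_succ_of_mem_Icc hK ht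
  have hmono := (strictMonoOn_Iic_of_lt_succ hθ).monotoneOn
  have hside : θ i ≤ θ j ∨ θ (j + 1) ≤ θ i := by
    rcases le_or_gt i j with h | h
    · exact Or.inl (hmono hi hj.le h)
    · exact Or.inr (hmono (Nat.succ_le_of_lt hj) hi h)
  rw [norm_sub_rev, abs_sub_comm, hg j hj t htj]
  exact norm_affineInterp_sub_le (hθ j hj) htj hside hα hC
    (hf _ (partition_mem_Icc hθ hj.le) _ (partition_mem_Icc hθ hi))
    (hf _ (partition_mem_Icc hθ hj) _ (partition_mem_Icc hθ hi))

theorem norm_interp_sub_interp_le (hK : 1 ≤ K) (hα : α ∈ Icc (0 : ℝ) 1) (hC : 0 ≤ C) :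
    ∀ s ∈ Icc (θ 0) (θ K), ∀ t ∈ Icc (θ 0) (θ K), ‖g s - g t‖ ≤ C * |s - t| ^ α := by
  intro s hs t ht
  obtain ⟨i, hi, hsi⟩ := exists_mem_Icc_succ_of_mem_Icc hK hs
  rw [hg i hi s hsi]
  by_cases hti : t ∈ Icc (θ i) (θ (i + 1))
  · have hfi := hf _ (partition_mem_Icc hθ hi.le) _ (partition_mem_Icc hθ hi)
    rw [abs_sub_comm, abs_of_pos (sub_pos.2 (hθ i hi))] at hfi
    rw [hg i hi t hti]
    exact norm_affineInterp_sub_affineInterp_le (hθ i hi) hsi hti hα.2 hC hfi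
  · have hside : t ≤ θ i ∨ θ (i + 1) ≤ t := by
      rw [mem_Icc, not_and_or, not_le, not_le] at hti
      exact hti.imp le_of_lt le_of_lt
    exact norm_affineInterp_sub_le (hθ i hi) hsi hside hα hC
      (norm_node_sub_interp_le hθ hg hf hK hα hC hi.le ht)
      (norm_node_sub_interp_le hθ hg hf hK hα hC hi ht)

end Partition

theorem lem_est_hoelder_semi_norm_general
    {E : Type} [NormedAddCommGroup E] [NormedSpace ℝ E]
    (T : ℝ) (α : ℝ) (hα : α ∈ Set.Icc (0:ℝ) 1)
    (K : ℕ) (hK : 1 ≤ K) (θ : ℕ → ℝ)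
    (hθ0 : θ 0 = 0) (hθK : θ K = T)
    (hθmono : ∀ j, j < K → θ j < θ (j + 1))
    (f g : ℝ → E)
    (hg : ∀ j, j < K → ∀ s ∈ Set.Icc (θ j) (θ (j + 1)),
        g s = ((θ (j + 1) - s) / (θ (j + 1) - θ j)) • f (θ j)
            + ((s - θ j) / (θ (j + 1) - θ j)) • f (θ (j + 1))) :
    holderSemiOn T α g ≤ holderSemiOn T α f := by
  rcases eq_top_or_lt_top (holderSemiOn T α f) with hf | hf
  · exact hf ▸ le_top
  lift holderSemiOn T α f to ℝ≥0 using hf.ne with C hC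
  have hfC := holderSemiOn_le_coe_iff.1 hC.ge
  rw [holderSemiOn_le_coe_iff, ← hθ0, ← hθK]
  rw [← hθ0, ← hθK] at hfC
  exact norm_interp_sub_interp_le hθmono hg hfC hK hα C.coe_nonneg

/-- **Lemma 2.5**: the piecewise affine linear interpolation `g = [f]_θ` of a
function `f` at the nodes of a partition `θ` of `[0,T]` has Hölder seminorm at
most that of `f`. -/
theorem lem_est_hoelder_semi_norm
    {E : Type} [NormedAddCommGroup E] [NormedSpace ℝ E]
    (T : ℝ) (hT : 0 < T) (α : ℝ) (hα : α ∈ Set.Icc (0:ℝ) 1)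
    (K : ℕ) (hK : 1 ≤ K) (θ : ℕ → ℝ)
    (hθ0 : θ 0 = 0) (hθK : θ K = T)
    (hθmono : ∀ j, j < K → θ j < θ (j + 1))
    (f g : ℝ → E)
    (hg : ∀ j, j < K → ∀ s ∈ Set.Icc (θ j) (θ (j + 1)),
        g s = ((θ (j + 1) - s) / (θ (j + 1) - θ j)) • f (θ j)
            + ((s - θ j) / (θ (j + 1) - θ j)) • f (θ (j + 1))) :
    holderSemiOn T α g ≤ holderSemiOn T α f :=
  lem_est_hoelder_semi_norm_general T α hα K hK θ hθ0 hθK hθmono f g hg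
end

section
/- Let T ∈ (0,∞), p ∈ [1,∞), β ∈ [0,1], let (Ω,F,P) be a probability space, let (E,‖·‖_E) be a real Banach space, and let Y^N : [0,T]×Ω → E, N ∈ ℕ_0, be strongly measurable stochastic processes with continuous sample paths such that limsup_{N→∞} |Y^N|_{C^β([0,T];L^p)} < ∞ and such that for every t ∈ [0,T]: limsup_{N→∞} ‖Y^0_t − Y^N_t‖_{L^p(P;E)} = 0. Then: (i) |Y^0|_{C^β([0,T];L^p)} ≤ limsup_{N→∞} |Y^N|_{C^β([0,T];L^p)} < ∞; (ii) for all α ∈ [0,1] with α < β: limsup_{N→∞} ‖Y^0 − Y^N‖_{C^α([0,T];L^p)} = 0; and (iii) for all α ∈ [0,1] with α < β − 1/p: limsup_{N→∞} ‖Y^0 − Y^N‖_{L^p(P;C^α([0,T],E))} = 0. -/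
open MeasureTheory ENNReal Filter

/-- The Hölder norm (exponent `r`) of `f` on `[0,T]`. -/
noncomputable def holderNormOn {E : Type} [NormedAddCommGroup E]
    (T : ℝ) (r : ℝ) (f : ℝ → E) : ℝ≥0∞ :=
  supNormOn T f + holderSemiOn T r f

/-- Hölder seminorm in time of a stochastic process, measured in `L^p(P;E)`. -/
noncomputable def lpHolderSemi {Ω E : Type} [MeasurableSpace Ω] [NormedAddCommGroup E]
    (P : MeasureTheory.Measure Ω) (T p r : ℝ) (X : ℝ → Ω → E) : ℝ≥0∞ :=
  ⨆ (s : ℝ) (t : ℝ) (_ : s ∈ Set.Icc (0:ℝ) T) (_ : t ∈ Set.Icc (0:ℝ) T)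
    (_ : s ≠ t),
    MeasureTheory.eLpNorm (fun ω => X s ω - X t ω) (ENNReal.ofReal p) P
      / ENNReal.ofReal (|s - t| ^ r)

/-- Supremum in time of the `L^p(P;E)`-norms of a stochastic process. -/
noncomputable def lpSupNorm {Ω E : Type} [MeasurableSpace Ω] [NormedAddCommGroup E]
    (P : MeasureTheory.Measure Ω) (T p : ℝ) (X : ℝ → Ω → E) : ℝ≥0∞ :=
  ⨆ (t : ℝ) (_ : t ∈ Set.Icc (0:ℝ) T),
    MeasureTheory.eLpNorm (X t) (ENNReal.ofReal p) P

/-- Hölder norm in time of a stochastic process, measured in `L^p(P;E)`. -/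
noncomputable def lpHolderNorm {Ω E : Type} [MeasurableSpace Ω] [NormedAddCommGroup E]
    (P : MeasureTheory.Measure Ω) (T p r : ℝ) (X : ℝ → Ω → E) : ℝ≥0∞ :=
  lpSupNorm P T p X + lpHolderSemi P T p r X

/-- The `L^p(P; C^r([0,T],E))`-norm of a stochastic process. -/
noncomputable def lpOfHolderNorm {Ω E : Type} [MeasurableSpace Ω] [NormedAddCommGroup E]
    (P : Measure Ω) (T p r : ℝ) (X : ℝ → Ω → E) : ℝ≥0∞ :=
  (∫⁻ ω, (holderNormOn T r (fun t => X t ω)) ^ p ∂P) ^ (1 / p)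


/-!
Part (i) is lower semicontinuity: for fixed `s, t` the triangle inequality bounds
`‖Y⁰ₛ - Y⁰ₜ‖_{Lᵖ}` by `‖Yᴺₛ - Yᴺₜ‖_{Lᵖ}` plus two terms that vanish as `N → ∞`.

For part (ii) put `Dᴺ = Y⁰ - Yᴺ`; by (i) its `β`-seminorms stay bounded. On the dyadic grid of
mesh `δ` the sup norm of `Dᴺ` is at most the sum of its finitely many grid values, which tend to
`0`, plus `C δ^β`. The `α`-seminorm interpolates: increments over distances `≤ δ` are at most
`C δ^(β-α) |s - t|^α`, those over distances `> δ` at most `2 sup ‖Dᴺ‖ δ^(-α) |s - t|^α`.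

Part (iii) is a quantitative Kolmogorov–Chentsov estimate. Chaining along dyadic grids bounds the
`a`-Hölder seminorm of a continuous path by `∑ₙ δₙ^(-a) Mₙ`, where `δₙ = T 2⁻ⁿ` and `Mₙ` is the
largest increment between neighbouring points of the `n`-th grid. As a maximum of `2ⁿ` increments,
`‖Mₙ‖_{Lᵖ} ≤ 2^(n/p) |X|_{C^b(Lᵖ)} δₙ^b`, and the resulting series converges when
`a + 1/p < b`. Taking `a = α` and `b ∈ (α + 1/p, β)` reduces (iii) to (ii).
-/

open Set Topology

section DyadicGrid

variable {T t : ℝ}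

noncomputable def dyadicMesh (T : ℝ) (n : ℕ) : ℝ := T / 2 ^ n

lemma dyadicMesh_pos (hT : 0 < T) (n : ℕ) : 0 < dyadicMesh T n := by
  unfold dyadicMesh; positivity

lemma dyadicMesh_eq_two_mul (T : ℝ) (n : ℕ) : dyadicMesh T n = 2 * dyadicMesh T (n + 1) := by
  unfold dyadicMesh; rw [pow_succ]; field_simp

lemma dyadicMesh_antitone (hT : 0 ≤ T) : Antitone (dyadicMesh T) := fun _ _ hmn =>
  div_le_div_of_nonneg_left hT (by positivity) (pow_le_pow_right₀ one_le_two hmn)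

lemma natCast_mul_dyadicMesh_mem (hT : 0 ≤ T) {n k : ℕ} (hk : k ≤ 2 ^ n) :
    (k : ℝ) * dyadicMesh T n ∈ Icc 0 T := by
  refine ⟨by unfold dyadicMesh; positivity, ?_⟩
  calc (k : ℝ) * dyadicMesh T n ≤ 2 ^ n * (T / 2 ^ n) := by
        unfold dyadicMesh; gcongr; exact_mod_cast hk
    _ = T := by field_simp

lemma summable_dyadicMesh_rpow (hT : 0 < T) {c : ℝ} (hc : 0 < c) :
    Summable fun n => dyadicMesh T n ^ c := by
  have h : ∀ n : ℕ, dyadicMesh T n ^ c = T ^ c * ((2 : ℝ) ^ c)⁻¹ ^ n := fun n => by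
    rw [dyadicMesh, Real.div_rpow hT.le (by positivity), ← Real.rpow_pow_comm zero_le_two,
      inv_pow, div_eq_mul_inv]
  simp_rw [h]
  exact (summable_geometric_of_lt_one (by positivity)
    (inv_lt_one_of_one_lt₀ (Real.one_lt_rpow one_lt_two hc))).mul_left _

lemma tendsto_dyadicMesh_rpow (hT : 0 < T) {c : ℝ} (hc : 0 < c) :
    Tendsto (fun n => dyadicMesh T n ^ c) atTop (𝓝 0) :=
  (summable_dyadicMesh_rpow hT hc).tendsto_atTop_zero

lemma exists_dyadicMesh_lt_le {r : ℝ} (hr : 0 < r) (hrT : r ≤ T) :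
    ∃ m, dyadicMesh T (m + 1) < r ∧ r ≤ dyadicMesh T m := by
  obtain ⟨m, hle, hlt⟩ := exists_nat_pow_near ((one_le_div hr).2 hrT) one_lt_two
  refine ⟨m, ?_, ?_⟩
  · rw [dyadicMesh, div_lt_iff₀ (by positivity), mul_comm]
    exact (div_lt_iff₀ hr).1 hlt
  · rw [dyadicMesh, le_div_iff₀ (by positivity), mul_comm]
    exact (le_div_iff₀ hr).1 hle

noncomputable def dyadicFloor (T t : ℝ) (n : ℕ) : ℕ := ⌊t / dyadicMesh T n⌋₊

lemma dyadicFloor_le (hT : 0 < T) (ht : t ≤ T) (n : ℕ) : dyadicFloor T t n ≤ 2 ^ n := by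
  refine Nat.floor_le_of_le ?_
  rw [div_le_iff₀ (dyadicMesh_pos hT n), dyadicMesh]
  field_simp
  push_cast
  rw [mul_comm]
  exact mul_le_mul_of_nonneg_left ht (by positivity)

lemma dyadicFloor_mul_mem (hT : 0 < T) (ht : t ∈ Icc 0 T) (n : ℕ) :
    (dyadicFloor T t n : ℝ) * dyadicMesh T n ∈ Icc 0 T :=
  natCast_mul_dyadicMesh_mem hT.le (dyadicFloor_le hT ht.2 n)

lemma dyadicFloor_mul_le (hT : 0 < T) (ht : 0 ≤ t) (n : ℕ) :
    (dyadicFloor T t n : ℝ) * dyadicMesh T n ≤ t :=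
  (le_div_iff₀ (dyadicMesh_pos hT n)).1 (Nat.floor_le (div_nonneg ht (dyadicMesh_pos hT n).le))

lemma sub_lt_dyadicFloor_mul (hT : 0 < T) (n : ℕ) :
    t - dyadicMesh T n < (dyadicFloor T t n : ℝ) * dyadicMesh T n := by
  have h := Nat.lt_floor_add_one (t / dyadicMesh T n)
  rw [div_lt_iff₀ (dyadicMesh_pos hT n)] at h
  unfold dyadicFloor
  linarith

lemma dyadicFloor_succ_div_two (hT : 0 < T) (n : ℕ) :
    dyadicFloor T t (n + 1) / 2 = dyadicFloor T t n := by
  rw [dyadicFloor, dyadicFloor, ← Nat.floor_div_natCast, dyadicMesh_eq_two_mul T n]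
  congr 1
  have := dyadicMesh_pos hT (n + 1)
  push_cast
  field_simp

lemma dyadicFloor_le_dyadicFloor_add_one (hT : 0 < T) {s : ℝ} (ht : 0 ≤ t) {n : ℕ}
    (hst : s ≤ t + dyadicMesh T n) : dyadicFloor T s n ≤ dyadicFloor T t n + 1 := by
  have hδ := dyadicMesh_pos hT n
  rw [dyadicFloor, dyadicFloor, ← Nat.floor_add_one (div_nonneg ht hδ.le)]
  refine Nat.floor_le_floor ?_
  rw [div_add_one hδ.ne']
  gcongr

lemma tendsto_dyadicFloor_mul (hT : 0 < T) (ht : 0 ≤ t) :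
    Tendsto (fun n => (dyadicFloor T t n : ℝ) * dyadicMesh T n) atTop (𝓝 t) := by
  have hmesh : Tendsto (dyadicMesh T) atTop (𝓝 0) := by
    simpa using tendsto_dyadicMesh_rpow hT one_pos
  refine tendsto_of_tendsto_of_tendsto_of_le_of_le (by simpa using tendsto_const_nhds.sub hmesh)
    tendsto_const_nhds (fun n => (sub_lt_dyadicFloor_mul hT n).le)
    (fun n => dyadicFloor_mul_le hT ht n)

end DyadicGrid

section Chaining

variable {E : Type*} [PseudoEMetricSpace E] {T s t : ℝ} {f : ℝ → E}

noncomputable def dyadicOsc (T : ℝ) (f : ℝ → E) (n : ℕ) : ℝ≥0∞ :=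
  ⨆ (k : ℕ) (_ : k < 2 ^ n), edist (f (↑(k + 1) * dyadicMesh T n)) (f (k * dyadicMesh T n))

lemma edist_le_dyadicOsc {n a b : ℕ} (hab : a ≤ b) (hba : b ≤ a + 1) (hb : b ≤ 2 ^ n) :
    edist (f (b * dyadicMesh T n)) (f (a * dyadicMesh T n)) ≤ dyadicOsc T f n := by
  obtain rfl | rfl : b = a ∨ b = a + 1 := by omega
  · simp
  · exact le_iSup₂ (f := fun (k : ℕ) (_ : k < 2 ^ n) =>
      edist (f (↑(k + 1) * dyadicMesh T n)) (f (k * dyadicMesh T n))) a hb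

lemma edist_dyadicFloor_succ_le (hT : 0 < T) (ht : t ≤ T) (n : ℕ) :
    edist (f (dyadicFloor T t (n + 1) * dyadicMesh T (n + 1)))
      (f (dyadicFloor T t n * dyadicMesh T n)) ≤ dyadicOsc T f (n + 1) := by
  set k := dyadicFloor T t (n + 1)
  have hpt : (dyadicFloor T t n : ℝ) * dyadicMesh T n = ↑(2 * (k / 2)) * dyadicMesh T (n + 1) := by
    rw [← dyadicFloor_succ_div_two hT n, dyadicMesh_eq_two_mul T n]
    push_cast
    ring
  rw [hpt]
  exact edist_le_dyadicOsc (by omega) (by omega) (dyadicFloor_le hT ht _)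

lemma edist_dyadicFloor_le_sum (hT : 0 < T) (ht : t ≤ T) (m d : ℕ) :
    edist (f (dyadicFloor T t (m + d) * dyadicMesh T (m + d)))
      (f (dyadicFloor T t m * dyadicMesh T m))
      ≤ ∑ j ∈ Finset.range d, dyadicOsc T f (m + j + 1) := by
  induction d with
  | zero => simp
  | succ d ih =>
    rw [Finset.sum_range_succ, add_comm (Finset.sum _ _)]
    exact (edist_triangle _ _ _).trans
      (add_le_add (edist_dyadicFloor_succ_le hT ht (m + d)) ih)

lemma edist_dyadicFloor_le_tsum (hT : 0 < T) (hf : ContinuousOn f (Icc 0 T))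
    (ht : t ∈ Icc 0 T) (m : ℕ) :
    edist (f t) (f (dyadicFloor T t m * dyadicMesh T m))
      ≤ ∑' j, dyadicOsc T f (m + j + 1) := by
  have hlim : Tendsto (fun d => f (dyadicFloor T t (m + d) * dyadicMesh T (m + d))) atTop
      (𝓝 (f t)) :=
    (hf t ht).tendsto.comp <| tendsto_nhdsWithin_iff.2
      ⟨(tendsto_dyadicFloor_mul hT ht.1).comp
        (tendsto_atTop_mono (Nat.le_add_left · m) tendsto_id),
        Eventually.of_forall fun d => dyadicFloor_mul_mem hT ht (m + d)⟩
  exact le_of_tendsto (hlim.edist tendsto_const_nhds) <| Eventually.of_forall fun d =>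
    (edist_dyadicFloor_le_sum hT ht.2 m d).trans (ENNReal.sum_le_tsum _)

lemma edist_le_two_mul_tsum_dyadicOsc (hT : 0 < T) (hf : ContinuousOn f (Icc 0 T))
    (hs : s ∈ Icc 0 T) (ht : t ∈ Icc 0 T) {m : ℕ} (hst : |s - t| ≤ dyadicMesh T m) :
    edist (f s) (f t) ≤ 2 * ∑' j, dyadicOsc T f (m + j) := by
  set R := ∑' j, dyadicOsc T f (m + j + 1)
  have hgrid : edist (f (dyadicFloor T s m * dyadicMesh T m))
      (f (dyadicFloor T t m * dyadicMesh T m)) ≤ dyadicOsc T f m := by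
    have habs := abs_sub_le_iff.1 hst
    have hs_le := dyadicFloor_le_dyadicFloor_add_one (s := s) hT ht.1 (by linarith)
    have ht_le := dyadicFloor_le_dyadicFloor_add_one (s := t) hT hs.1 (by linarith)
    rcases le_total (dyadicFloor T s m) (dyadicFloor T t m) with h | h
    · rw [edist_comm]; exact edist_le_dyadicOsc h ht_le (dyadicFloor_le hT ht.2 m)
    · exact edist_le_dyadicOsc h hs_le (dyadicFloor_le hT hs.2 m)
  calc edist (f s) (f t)
      ≤ edist (f s) (f (dyadicFloor T s m * dyadicMesh T m))
        + edist (f (dyadicFloor T s m * dyadicMesh T m)) (f (dyadicFloor T t m * dyadicMesh T m))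
        + edist (f (dyadicFloor T t m * dyadicMesh T m)) (f t) := edist_triangle4 _ _ _ _
    _ ≤ R + dyadicOsc T f m + R := by
        rw [edist_comm _ (f t)]
        gcongr
        · exact edist_dyadicFloor_le_tsum hT hf hs m
        · exact edist_dyadicFloor_le_tsum hT hf ht m
    _ = (dyadicOsc T f m + R) + R := by ring
    _ ≤ (dyadicOsc T f m + R) + (dyadicOsc T f m + R) := by gcongr; exact le_add_self
    _ = 2 * ∑' j, dyadicOsc T f (m + j) := by
        rw [← two_mul, tsum_eq_zero_add' ENNReal.summable]; rfl

end Chaining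

section PathwiseHolder

variable {E : Type} [NormedAddCommGroup E] {T a r : ℝ} {f : ℝ → E}

lemma enorm_sub_le_holderSemiOn_mul {s t : ℝ} (hs : s ∈ Icc 0 T) (ht : t ∈ Icc 0 T) :
    ‖f s - f t‖ₑ ≤ holderSemiOn T r f * ENNReal.ofReal (|s - t| ^ r) := by
  rcases eq_or_ne s t with rfl | hst
  · simp
  have hpos : ENNReal.ofReal (|s - t| ^ r) ≠ 0 := by
    simpa using Real.rpow_pos_of_pos (abs_pos.2 (sub_ne_zero.2 hst)) r
  exact (ENNReal.div_le_iff hpos ofReal_ne_top).1 <|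
    le_iSup_of_le s <| le_iSup_of_le t <| le_iSup_of_le hs <| le_iSup_of_le ht <|
      le_iSup_of_le hst le_rfl

lemma holderSemiOn_le_of_forall {c : ℝ≥0∞}
    (h : ∀ s ∈ Icc 0 T, ∀ t ∈ Icc 0 T, s ≠ t → ‖f s - f t‖ₑ ≤ c * ENNReal.ofReal (|s - t| ^ r)) :
    holderSemiOn T r f ≤ c :=
  iSup_le fun s => iSup_le fun t => iSup_le fun hs => iSup_le fun ht => iSup_le fun hst =>
    ENNReal.div_le_of_le_mul (h s hs t ht hst)

lemma supNormOn_le_add (hT : 0 ≤ T) (ha : 0 ≤ a) (f : ℝ → E) :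
    supNormOn T f ≤ ‖f 0‖ₑ + ENNReal.ofReal (T ^ a) * holderSemiOn T a f := by
  refine iSup₂_le fun t ht => ?_
  calc (‖f t‖₊ : ℝ≥0∞) = ‖f 0 + (f t - f 0)‖ₑ := by rw [add_sub_cancel]; rfl
    _ ≤ ‖f 0‖ₑ + holderSemiOn T a f * ENNReal.ofReal (|t - 0| ^ a) :=
        (enorm_add_le _ _).trans (by gcongr; exact enorm_sub_le_holderSemiOn_mul ht ⟨le_rfl, hT⟩)
    _ ≤ ‖f 0‖ₑ + ENNReal.ofReal (T ^ a) * holderSemiOn T a f := by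
        have hta : t ^ a ≤ T ^ a := Real.rpow_le_rpow ht.1 ht.2 ha
        rw [mul_comm, sub_zero, abs_of_nonneg ht.1]
        gcongr

noncomputable def dyadicHolderSum (T a : ℝ) (f : ℝ → E) : ℝ≥0∞ :=
  ∑' n, ENNReal.ofReal (dyadicMesh T n ^ (-a)) * dyadicOsc T f n

lemma tsum_dyadicOsc_le (hT : 0 < T) (ha : 0 ≤ a) (f : ℝ → E) (m : ℕ) :
    ∑' j, dyadicOsc T f (m + j)
      ≤ ENNReal.ofReal (dyadicMesh T m ^ a) * dyadicHolderSum T a f := by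
  calc ∑' j, dyadicOsc T f (m + j)
      ≤ ∑' j, ENNReal.ofReal (dyadicMesh T m ^ a)
          * (ENNReal.ofReal (dyadicMesh T (m + j) ^ (-a)) * dyadicOsc T f (m + j)) := by
        refine ENNReal.tsum_le_tsum fun j => ?_
        have hδ := dyadicMesh_pos hT (m + j)
        rw [← mul_assoc, ← ENNReal.ofReal_mul (Real.rpow_nonneg (dyadicMesh_pos hT m).le _)]
        refine le_mul_of_one_le_left bot_le (ENNReal.one_le_ofReal.2 ?_)
        rw [Real.rpow_neg hδ.le, ← div_eq_mul_inv, one_le_div (by positivity)]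
        exact Real.rpow_le_rpow hδ.le (dyadicMesh_antitone hT.le (Nat.le_add_right m j)) ha
    _ ≤ ENNReal.ofReal (dyadicMesh T m ^ a) * dyadicHolderSum T a f := by
        rw [ENNReal.tsum_mul_left]
        gcongr
        exact ENNReal.tsum_comp_le_tsum_of_injective (add_right_injective m)
          fun n => ENNReal.ofReal (dyadicMesh T n ^ (-a)) * dyadicOsc T f n

lemma holderSemiOn_le_dyadicHolderSum (hT : 0 < T) (ha : 0 ≤ a)
    (hf : ContinuousOn f (Icc 0 T)) :
    holderSemiOn T a f ≤ ENNReal.ofReal (2 * 2 ^ a) * dyadicHolderSum T a f := by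
  refine holderSemiOn_le_of_forall fun s hs t ht hst => ?_
  have hr : 0 < |s - t| := abs_pos.2 (sub_ne_zero.2 hst)
  obtain ⟨m, hlt, hle⟩ :=
    exists_dyadicMesh_lt_le hr
      (abs_sub_le_iff.2 ⟨by linarith [hs.2, ht.1], by linarith [hs.1, ht.2]⟩ : |s - t| ≤ T)
  have hmesh : 2 * ENNReal.ofReal (dyadicMesh T m ^ a)
      ≤ ENNReal.ofReal (2 * 2 ^ a) * ENNReal.ofReal (|s - t| ^ a) := by
    have hδ := dyadicMesh_pos hT (m + 1)
    rw [← ENNReal.ofReal_ofNat 2, ← ENNReal.ofReal_mul zero_le_two,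
      ← ENNReal.ofReal_mul (by positivity), dyadicMesh_eq_two_mul T m,
      Real.mul_rpow zero_le_two hδ.le, mul_assoc]
    gcongr
  calc ‖f s - f t‖ₑ = edist (f s) (f t) := (edist_eq_enorm_sub _ _).symm
    _ ≤ 2 * ∑' j, dyadicOsc T f (m + j) := edist_le_two_mul_tsum_dyadicOsc hT hf hs ht hle
    _ ≤ 2 * (ENNReal.ofReal (dyadicMesh T m ^ a) * dyadicHolderSum T a f) := by
        gcongr; exact tsum_dyadicOsc_le hT ha f m
    _ = 2 * ENNReal.ofReal (dyadicMesh T m ^ a) * dyadicHolderSum T a f := (mul_assoc ..).symm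
    _ ≤ ENNReal.ofReal (2 * 2 ^ a) * ENNReal.ofReal (|s - t| ^ a) * dyadicHolderSum T a f := by
        gcongr
    _ = ENNReal.ofReal (2 * 2 ^ a) * dyadicHolderSum T a f * ENNReal.ofReal (|s - t| ^ a) := by
        ring

lemma holderNormOn_le_dyadicHolderSum (hT : 0 < T) (ha : 0 ≤ a)
    (hf : ContinuousOn f (Icc 0 T)) :
    holderNormOn T a f
      ≤ ‖f 0‖ₑ + (1 + ENNReal.ofReal (T ^ a)) * ENNReal.ofReal (2 * 2 ^ a)
          * dyadicHolderSum T a f := by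
  calc holderNormOn T a f
      ≤ (‖f 0‖ₑ + ENNReal.ofReal (T ^ a) * holderSemiOn T a f) + holderSemiOn T a f :=
        add_le_add_left (supNormOn_le_add hT.le ha f) _
    _ = ‖f 0‖ₑ + (1 + ENNReal.ofReal (T ^ a)) * holderSemiOn T a f := by ring
    _ ≤ _ := by
        rw [mul_assoc]; gcongr; exact holderSemiOn_le_dyadicHolderSum hT ha hf

end PathwiseHolder

section ENNRealLp

variable {Ω : Type*} [MeasurableSpace Ω] {P : Measure Ω} {p : ℝ}

lemma ENNReal.eLpNorm_ofReal_eq_lintegral (hp : 0 < p) (g : Ω → ℝ≥0∞) :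
    eLpNorm g (ENNReal.ofReal p) P = (∫⁻ ω, g ω ^ p ∂P) ^ (1 / p) := by
  rw [eLpNorm_eq_lintegral_rpow_enorm_toReal (by simpa using hp) ofReal_ne_top,
    toReal_ofReal hp.le]
  simp only [enorm_eq_self]

lemma ENNReal.lintegral_rpow_eq_eLpNorm_rpow (hp : 0 < p) (g : Ω → ℝ≥0∞) :
    ∫⁻ ω, g ω ^ p ∂P = eLpNorm g (ENNReal.ofReal p) P ^ p := by
  rw [ENNReal.eLpNorm_ofReal_eq_lintegral hp, ← ENNReal.rpow_mul, one_div_mul_cancel hp.ne',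
    ENNReal.rpow_one]

lemma ENNReal.eLpNorm_const_mul (hp : 0 < p) (c : ℝ≥0∞) {g : Ω → ℝ≥0∞} (hg : AEMeasurable g P) :
    eLpNorm (fun ω => c * g ω) (ENNReal.ofReal p) P = c * eLpNorm g (ENNReal.ofReal p) P := by
  simp only [ENNReal.eLpNorm_ofReal_eq_lintegral hp, ENNReal.mul_rpow_of_nonneg _ _ hp.le]
  rw [lintegral_const_mul'' _ (hg.pow_const p), ENNReal.mul_rpow_of_nonneg _ _ (by positivity),
    ← ENNReal.rpow_mul, mul_one_div_cancel hp.ne', ENNReal.rpow_one]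

lemma ENNReal.eLpNorm_biSup_lt_le (hp : 0 < p) {N : ℕ} {g : ℕ → Ω → ℝ≥0∞}
    (hg : ∀ k < N, AEMeasurable (g k) P) {c : ℝ≥0∞}
    (hc : ∀ k < N, eLpNorm (g k) (ENNReal.ofReal p) P ≤ c) :
    eLpNorm (fun ω => ⨆ (k : ℕ) (_ : k < N), g k ω) (ENNReal.ofReal p) P
      ≤ (N : ℝ≥0∞) ^ (1 / p) * c := by
  have hpt : ∀ ω, (⨆ (k : ℕ) (_ : k < N), g k ω) ^ p ≤ ∑ k ∈ Finset.range N, g k ω ^ p :=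
    fun ω => by
      rw [← ENNReal.le_rpow_inv_iff hp]
      refine iSup₂_le fun k hk => (ENNReal.le_rpow_inv_iff hp).2 ?_
      exact Finset.single_le_sum (f := fun k => g k ω ^ p) (fun _ _ => bot_le)
        (Finset.mem_range.2 hk)
  have hint : ∫⁻ ω, (⨆ (k : ℕ) (_ : k < N), g k ω) ^ p ∂P ≤ N * c ^ p :=
    calc ∫⁻ ω, (⨆ (k : ℕ) (_ : k < N), g k ω) ^ p ∂P
        ≤ ∫⁻ ω, ∑ k ∈ Finset.range N, g k ω ^ p ∂P := lintegral_mono hpt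
      _ = ∑ k ∈ Finset.range N, ∫⁻ ω, g k ω ^ p ∂P :=
        lintegral_finsetSum' _ fun k hk => (hg k (Finset.mem_range.1 hk)).pow_const p
      _ ≤ ∑ _k ∈ Finset.range N, c ^ p := Finset.sum_le_sum fun k hk => by
        rw [ENNReal.lintegral_rpow_eq_eLpNorm_rpow hp]
        exact ENNReal.rpow_le_rpow (hc k (Finset.mem_range.1 hk)) hp.le
      _ = N * c ^ p := by simp
  calc eLpNorm (fun ω => ⨆ (k : ℕ) (_ : k < N), g k ω) (ENNReal.ofReal p) P
      ≤ (N * c ^ p) ^ (1 / p) := by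
        rw [ENNReal.eLpNorm_ofReal_eq_lintegral hp]; gcongr
    _ = (N : ℝ≥0∞) ^ (1 / p) * c := by
        rw [ENNReal.mul_rpow_of_nonneg _ _ (by positivity), ← ENNReal.rpow_mul,
          mul_one_div_cancel hp.ne', ENNReal.rpow_one]

lemma ENNReal.eLpNorm_tsum_le (hp : 1 ≤ p) {g : ℕ → Ω → ℝ≥0∞} (hg : ∀ n, AEMeasurable (g n) P) :
    eLpNorm (fun ω => ∑' n, g n ω) (ENNReal.ofReal p) P
      ≤ ∑' n, eLpNorm (g n) (ENNReal.ofReal p) P := by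
  have hp0 : 0 < p := by linarith
  have hsum : ∀ K, AEMeasurable (fun ω => ∑ n ∈ Finset.range K, g n ω) P := fun K =>
    Finset.aemeasurable_fun_sum _ fun n _ => hg n
  have hpartial : ∀ K, eLpNorm (fun ω => ∑ n ∈ Finset.range K, g n ω) (ENNReal.ofReal p) P
      ≤ ∑' n, eLpNorm (g n) (ENNReal.ofReal p) P := fun K =>
    calc eLpNorm (fun ω => ∑ n ∈ Finset.range K, g n ω) (ENNReal.ofReal p) P
        ≤ ∑ n ∈ Finset.range K, eLpNorm (g n) (ENNReal.ofReal p) P := by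
          rw [← Finset.sum_fn]
          exact eLpNorm_sum_le (fun n _ => (hg n).aestronglyMeasurable) (ENNReal.one_le_ofReal.2 hp)
      _ ≤ ∑' n, eLpNorm (g n) (ENNReal.ofReal p) P := ENNReal.sum_le_tsum _
  have hrpow : ∀ {q : ℝ} (hq : 0 < q) (x : ℕ → ℝ≥0∞), (⨆ K, x K) ^ q = ⨆ K, x K ^ q :=
    fun hq x => (ENNReal.orderIsoRpow _ hq).map_iSup x
  have hmono : ∀ ω, Monotone fun K => (∑ n ∈ Finset.range K, g n ω) ^ p := fun ω _ _ h =>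
    ENNReal.rpow_le_rpow (Finset.sum_le_sum_of_subset (Finset.range_subset_range.2 h)) hp0.le
  calc eLpNorm (fun ω => ∑' n, g n ω) (ENNReal.ofReal p) P
      = ⨆ K, (∫⁻ ω, (∑ n ∈ Finset.range K, g n ω) ^ p ∂P) ^ (1 / p) := by
        simp_rw [ENNReal.eLpNorm_ofReal_eq_lintegral hp0, ENNReal.tsum_eq_iSup_nat, hrpow hp0]
        rw [lintegral_iSup' (fun K => (hsum K).pow_const p) (ae_of_all _ hmono),
          hrpow (by positivity)]
    _ ≤ ∑' n, eLpNorm (g n) (ENNReal.ofReal p) P := iSup_le fun K => by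
        rw [← ENNReal.eLpNorm_ofReal_eq_lintegral hp0]; exact hpartial K

end ENNRealLp

section LpProcesses

variable {Ω E : Type} [MeasurableSpace Ω] [NormedAddCommGroup E] {P : Measure Ω}
  {T p r : ℝ} {X : ℝ → Ω → E}

lemma eLpNorm_sub_le_lpHolderSemi_mul {s t : ℝ} (hs : s ∈ Icc 0 T) (ht : t ∈ Icc 0 T) :
    eLpNorm (fun ω => X s ω - X t ω) (ENNReal.ofReal p) P
      ≤ lpHolderSemi P T p r X * ENNReal.ofReal (|s - t| ^ r) := by
  rcases eq_or_ne s t with rfl | hst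
  · simp
  have hpos : ENNReal.ofReal (|s - t| ^ r) ≠ 0 := by
    simpa using Real.rpow_pos_of_pos (abs_pos.2 (sub_ne_zero.2 hst)) r
  exact (ENNReal.div_le_iff hpos ofReal_ne_top).1 <|
    le_iSup_of_le s <| le_iSup_of_le t <| le_iSup_of_le hs <| le_iSup_of_le ht <|
      le_iSup_of_le hst le_rfl

lemma lpHolderSemi_le_of_forall {c : ℝ≥0∞}
    (h : ∀ s ∈ Icc 0 T, ∀ t ∈ Icc 0 T, s ≠ t →
      eLpNorm (fun ω => X s ω - X t ω) (ENNReal.ofReal p) P ≤ c * ENNReal.ofReal (|s - t| ^ r)) :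
    lpHolderSemi P T p r X ≤ c :=
  iSup_le fun s => iSup_le fun t => iSup_le fun hs => iSup_le fun ht => iSup_le fun hst =>
    ENNReal.div_le_of_le_mul (h s hs t ht hst)

lemma eLpNorm_le_lpSupNorm {t : ℝ} (ht : t ∈ Icc 0 T) :
    eLpNorm (X t) (ENNReal.ofReal p) P ≤ lpSupNorm P T p X :=
  le_iSup₂ (f := fun t (_ : t ∈ Icc 0 T) => eLpNorm (X t) (ENNReal.ofReal p) P) t ht

lemma lpSupNorm_le_lpHolderNorm (r : ℝ) : lpSupNorm P T p X ≤ lpHolderNorm P T p r X :=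
  le_self_add

lemma lpHolderSemi_le_lpHolderNorm : lpHolderSemi P T p r X ≤ lpHolderNorm P T p r X :=
  le_add_self

lemma lpOfHolderNorm_eq_eLpNorm (hp : 0 < p) :
    lpOfHolderNorm P T p r X
      = eLpNorm (fun ω => holderNormOn T r (X · ω)) (ENNReal.ofReal p) P := by
  rw [ENNReal.eLpNorm_ofReal_eq_lintegral hp]; rfl

lemma aemeasurable_dyadicOsc (hT : 0 < T) (hX : ∀ t ∈ Icc 0 T, AEStronglyMeasurable (X t) P)
    (n : ℕ) : AEMeasurable (fun ω => dyadicOsc T (X · ω) n) P :=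
  AEMeasurable.iSup fun k => AEMeasurable.iSup fun (hk : k < 2 ^ n) =>
    ((hX _ (natCast_mul_dyadicMesh_mem hT.le hk)).sub
      (hX _ (natCast_mul_dyadicMesh_mem hT.le (Nat.le_of_succ_le hk)))).enorm.congr <|
        ae_of_all _ fun _ => (edist_eq_enorm_sub _ _).symm

lemma eLpNorm_dyadicOsc_le (hT : 0 < T) (hp : 0 < p)
    (hX : ∀ t ∈ Icc 0 T, AEStronglyMeasurable (X t) P) (n : ℕ) :
    eLpNorm (fun ω => dyadicOsc T (X · ω) n) (ENNReal.ofReal p) P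
      ≤ ((2 ^ n : ℕ) : ℝ≥0∞) ^ (1 / p)
          * (lpHolderSemi P T p r X * ENNReal.ofReal (dyadicMesh T n ^ r)) := by
  have hmem : ∀ k < 2 ^ n, ((k + 1 : ℕ) : ℝ) * dyadicMesh T n ∈ Icc 0 T ∧
      (k : ℝ) * dyadicMesh T n ∈ Icc 0 T := fun k hk =>
    ⟨natCast_mul_dyadicMesh_mem hT.le hk, natCast_mul_dyadicMesh_mem hT.le (Nat.le_of_succ_le hk)⟩
  refine ENNReal.eLpNorm_biSup_lt_le hp (fun k hk => ?_) fun k hk => ?_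
  · exact (((hX _ (hmem k hk).1).sub (hX _ (hmem k hk).2)).enorm.congr <|
      ae_of_all _ fun _ => (edist_eq_enorm_sub _ _).symm)
  · have hdist : |((k + 1 : ℕ) : ℝ) * dyadicMesh T n - k * dyadicMesh T n| = dyadicMesh T n := by
      push_cast
      rw [← sub_mul, add_sub_cancel_left, one_mul, abs_of_pos (dyadicMesh_pos hT n)]
    simp_rw [edist_eq_enorm_sub]
    rw [eLpNorm_enorm]
    exact (eLpNorm_sub_le_lpHolderSemi_mul (hmem k hk).1 (hmem k hk).2).trans_eq (by rw [hdist])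

end LpProcesses

section Kolmogorov

variable {Ω E : Type} [MeasurableSpace Ω] [NormedAddCommGroup E] {P : Measure Ω} {T p a b : ℝ}
  {X : ℝ → Ω → E}

noncomputable def dyadicWeightSum (T p a b : ℝ) : ℝ≥0∞ :=
  ∑' n : ℕ, ENNReal.ofReal (dyadicMesh T n ^ (-a))
    * (((2 ^ n : ℕ) : ℝ≥0∞) ^ (1 / p) * ENNReal.ofReal (dyadicMesh T n ^ b))

lemma dyadicWeightSum_ne_top (hT : 0 < T) (hp : 0 < p) (hab : a + 1 / p < b) :
    dyadicWeightSum T p a b ≠ ⊤ := by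
  have hterm : ∀ n : ℕ, ENNReal.ofReal (dyadicMesh T n ^ (-a))
      * (((2 ^ n : ℕ) : ℝ≥0∞) ^ (1 / p) * ENNReal.ofReal (dyadicMesh T n ^ b))
      = ENNReal.ofReal (T ^ (1 / p) * dyadicMesh T n ^ (b - a - 1 / p)) := fun n => by
    have hδ := dyadicMesh_pos hT n
    have h2n : ((2 ^ n : ℕ) : ℝ≥0∞) = ENNReal.ofReal (T / dyadicMesh T n) := by
      rw [dyadicMesh, div_div_cancel₀ hT.ne', ← ENNReal.ofReal_natCast]
      push_cast; rfl
    rw [h2n, ENNReal.ofReal_rpow_of_nonneg (by positivity) (by positivity),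
      ← ENNReal.ofReal_mul (by positivity), ← ENNReal.ofReal_mul (by positivity)]
    congr 1
    rw [Real.div_rpow hT.le hδ.le, Real.rpow_sub hδ, Real.rpow_sub hδ, Real.rpow_neg hδ.le]
    field_simp
  rw [dyadicWeightSum]
  simp_rw [hterm]
  rw [← ENNReal.ofReal_tsum_of_nonneg
    (fun n => mul_nonneg (by positivity) (Real.rpow_nonneg (dyadicMesh_pos hT n).le _))
    ((summable_dyadicMesh_rpow hT (by linarith)).mul_left _)]
  exact ofReal_ne_top

lemma aemeasurable_dyadicHolderSum (hT : 0 < T)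
    (hX : ∀ t ∈ Icc 0 T, AEStronglyMeasurable (X t) P) :
    AEMeasurable (fun ω => dyadicHolderSum T a (X · ω)) P :=
  AEMeasurable.tsum fun n => (aemeasurable_dyadicOsc hT hX n).const_mul _

lemma eLpNorm_dyadicHolderSum_le (hT : 0 < T) (hp : 1 ≤ p)
    (hX : ∀ t ∈ Icc 0 T, AEStronglyMeasurable (X t) P) :
    eLpNorm (fun ω => dyadicHolderSum T a (X · ω)) (ENNReal.ofReal p) P
      ≤ dyadicWeightSum T p a b * lpHolderSemi P T p b X := by
  have hp0 : 0 < p := by linarith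
  calc eLpNorm (fun ω => dyadicHolderSum T a (X · ω)) (ENNReal.ofReal p) P
      ≤ ∑' n, eLpNorm (fun ω => ENNReal.ofReal (dyadicMesh T n ^ (-a))
          * dyadicOsc T (X · ω) n) (ENNReal.ofReal p) P :=
        ENNReal.eLpNorm_tsum_le hp fun n => (aemeasurable_dyadicOsc hT hX n).const_mul _
    _ ≤ ∑' n : ℕ, ENNReal.ofReal (dyadicMesh T n ^ (-a))
          * (((2 ^ n : ℕ) : ℝ≥0∞) ^ (1 / p)
            * (lpHolderSemi P T p b X * ENNReal.ofReal (dyadicMesh T n ^ b))) := by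
        gcongr with n
        rw [ENNReal.eLpNorm_const_mul hp0 _ (aemeasurable_dyadicOsc hT hX n)]
        gcongr
        exact eLpNorm_dyadicOsc_le hT hp0 hX n
    _ = dyadicWeightSum T p a b * lpHolderSemi P T p b X := by
        rw [dyadicWeightSum, ← ENNReal.tsum_mul_right]
        congr with n
        ring

theorem lpOfHolderNorm_le_mul_lpHolderNorm (P : Measure Ω) (hT : 0 < T) (hp : 1 ≤ p)
    (ha : 0 ≤ a) (hab : a + 1 / p < b) :
    ∃ C : ℝ≥0∞, C ≠ ⊤ ∧ ∀ X : ℝ → Ω → E, (∀ t ∈ Icc 0 T, AEStronglyMeasurable (X t) P) →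
      (∀ ω, ContinuousOn (X · ω) (Icc 0 T)) →
        lpOfHolderNorm P T p a X ≤ C * lpHolderNorm P T p b X := by
  have hp0 : 0 < p := by linarith
  set C₁ := (1 + ENNReal.ofReal (T ^ a)) * ENNReal.ofReal (2 * 2 ^ a)
  set S := dyadicWeightSum T p a b
  have hS : S ≠ ⊤ := dyadicWeightSum_ne_top hT hp0 hab
  refine ⟨1 + C₁ * S, by finiteness, fun X hX hcont => ?_⟩
  have hW := aemeasurable_dyadicHolderSum (a := a) hT hX
  have hpath : ∀ ω, ‖holderNormOn T a (X · ω)‖ₑ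
      ≤ ‖‖X 0 ω‖ₑ + C₁ * dyadicHolderSum T a (X · ω)‖ₑ := fun ω => by
    simpa only [enorm_eq_self] using holderNormOn_le_dyadicHolderSum hT ha (hcont ω)
  calc lpOfHolderNorm P T p a X
      = eLpNorm (fun ω => holderNormOn T a (X · ω)) (ENNReal.ofReal p) P :=
        lpOfHolderNorm_eq_eLpNorm hp0
    _ ≤ eLpNorm (fun ω => ‖X 0 ω‖ₑ + C₁ * dyadicHolderSum T a (X · ω)) (ENNReal.ofReal p) P :=
        eLpNorm_mono_enorm hpath
    _ ≤ eLpNorm (fun ω => ‖X 0 ω‖ₑ) (ENNReal.ofReal p) P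
          + eLpNorm (fun ω => C₁ * dyadicHolderSum T a (X · ω)) (ENNReal.ofReal p) P :=
        eLpNorm_add_le (f := fun ω => ‖X 0 ω‖ₑ)
          (g := fun ω => C₁ * dyadicHolderSum T a (X · ω))
          (hX 0 ⟨le_rfl, hT.le⟩).enorm.aestronglyMeasurable
          ((hW.const_mul _).aestronglyMeasurable) (ENNReal.one_le_ofReal.2 hp)
    _ ≤ lpHolderNorm P T p b X + C₁ * (S * lpHolderNorm P T p b X) := by
        rw [eLpNorm_enorm, ENNReal.eLpNorm_const_mul hp0 _ hW]
        gcongr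
        · exact (eLpNorm_le_lpSupNorm ⟨le_rfl, hT.le⟩).trans (lpSupNorm_le_lpHolderNorm b)
        · exact (eLpNorm_dyadicHolderSum_le hT hp hX).trans
            (by gcongr; exact lpHolderSemi_le_lpHolderNorm)
    _ = (1 + C₁ * S) * lpHolderNorm P T p b X := by ring

end Kolmogorov

section Convergence

variable {Ω E ι : Type} [MeasurableSpace Ω] [NormedAddCommGroup E] {P : Measure Ω}
  {T p r α β : ℝ} {l : Filter ι}

lemma lpHolderSemi_sub_le (hp : 1 ≤ p) {X Y : ℝ → Ω → E}
    (hX : ∀ t ∈ Icc 0 T, AEStronglyMeasurable (X t) P)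
    (hY : ∀ t ∈ Icc 0 T, AEStronglyMeasurable (Y t) P) :
    lpHolderSemi P T p r (fun t ω => X t ω - Y t ω)
      ≤ lpHolderSemi P T p r X + lpHolderSemi P T p r Y := by
  refine lpHolderSemi_le_of_forall fun s hs t ht _ => ?_
  have hsplit : (fun ω => (X s ω - Y s ω) - (X t ω - Y t ω))
      = (fun ω => X s ω - X t ω) - (fun ω => Y s ω - Y t ω) := by
    ext ω; simp only [Pi.sub_apply]; abel
  rw [hsplit, add_mul]
  exact (eLpNorm_sub_le ((hX s hs).sub (hX t ht)) ((hY s hs).sub (hY t ht))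
    (ENNReal.one_le_ofReal.2 hp)).trans
    (add_le_add (eLpNorm_sub_le_lpHolderSemi_mul hs ht) (eLpNorm_sub_le_lpHolderSemi_mul hs ht))

lemma lpHolderSemi_le_limsup [l.NeBot] (hp : 1 ≤ p) {X : ℝ → Ω → E} {Y : ι → ℝ → Ω → E}
    (hX : ∀ t ∈ Icc 0 T, AEStronglyMeasurable (X t) P)
    (hY : ∀ i, ∀ t ∈ Icc 0 T, AEStronglyMeasurable (Y i t) P)
    (hconv : ∀ t ∈ Icc 0 T,
      Tendsto (fun i => eLpNorm (fun ω => X t ω - Y i t ω) (ENNReal.ofReal p) P) l (𝓝 0)) :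
    lpHolderSemi P T p r X ≤ limsup (fun i => lpHolderSemi P T p r (Y i)) l := by
  refine lpHolderSemi_le_of_forall fun s hs t ht _ => ?_
  set w := ENNReal.ofReal (|s - t| ^ r)
  have hp' : 1 ≤ ENNReal.ofReal p := ENNReal.one_le_ofReal.2 hp
  have htriangle : ∀ i, eLpNorm (fun ω => X s ω - X t ω) (ENNReal.ofReal p) P
      ≤ eLpNorm (fun ω => X s ω - Y i s ω) (ENNReal.ofReal p) P
        + (lpHolderSemi P T p r (Y i) * w
          + eLpNorm (fun ω => X t ω - Y i t ω) (ENNReal.ofReal p) P) := fun i => by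
    have hsplit : (fun ω => X s ω - X t ω) = (fun ω => X s ω - Y i s ω)
        + ((fun ω => Y i s ω - Y i t ω) - (fun ω => X t ω - Y i t ω)) := by
      ext ω; simp only [Pi.add_apply, Pi.sub_apply]; abel
    rw [hsplit]
    exact (eLpNorm_add_le ((hX s hs).sub (hY i s hs))
      (((hY i s hs).sub (hY i t ht)).sub ((hX t ht).sub (hY i t ht))) hp').trans <|
      add_le_add le_rfl <|
        (eLpNorm_sub_le ((hY i s hs).sub (hY i t ht)) ((hX t ht).sub (hY i t ht)) hp').trans
          (add_le_add (eLpNorm_sub_le_lpHolderSemi_mul hs ht) le_rfl)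
  calc eLpNorm (fun ω => X s ω - X t ω) (ENNReal.ofReal p) P
      = limsup (fun _ => eLpNorm (fun ω => X s ω - X t ω) (ENNReal.ofReal p) P) l :=
        (limsup_const _).symm
    _ ≤ limsup (fun i => eLpNorm (fun ω => X s ω - Y i s ω) (ENNReal.ofReal p) P
          + (lpHolderSemi P T p r (Y i) * w
            + eLpNorm (fun ω => X t ω - Y i t ω) (ENNReal.ofReal p) P)) l :=
        limsup_le_limsup (Eventually.of_forall htriangle)
    _ = limsup (fun i => lpHolderSemi P T p r (Y i) * w) l :=
        (ENNReal.limsup_add_of_left_tendsto_zero (hconv s hs) _).trans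
          (ENNReal.limsup_add_of_right_tendsto_zero (hconv t ht) _)
    _ = limsup (fun i => lpHolderSemi P T p r (Y i)) l * w := by
        rw [ENNReal.limsup_mul_const_of_ne_top ofReal_ne_top, mul_comm]

lemma limsup_lpHolderSemi_sub_ne_top [l.NeBot] (hp : 1 ≤ p) {X : ℝ → Ω → E}
    {Y : ι → ℝ → Ω → E} (hX : ∀ t ∈ Icc 0 T, AEStronglyMeasurable (X t) P)
    (hY : ∀ i, ∀ t ∈ Icc 0 T, AEStronglyMeasurable (Y i t) P)
    (hX_ne_top : lpHolderSemi P T p r X ≠ ⊤)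
    (hY_ne_top : limsup (fun i => lpHolderSemi P T p r (Y i)) l ≠ ⊤) :
    limsup (fun i => lpHolderSemi P T p r (fun t ω => X t ω - Y i t ω)) l ≠ ⊤ := by
  refine ne_top_of_le_ne_top (ENNReal.add_ne_top.2 ⟨hX_ne_top, hY_ne_top⟩) ?_
  calc limsup (fun i => lpHolderSemi P T p r (fun t ω => X t ω - Y i t ω)) l
      ≤ limsup (fun i => lpHolderSemi P T p r X + lpHolderSemi P T p r (Y i)) l :=
        limsup_le_limsup (Eventually.of_forall fun i => lpHolderSemi_sub_le hp hX (hY i))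
    _ = lpHolderSemi P T p r X + limsup (fun i => lpHolderSemi P T p r (Y i)) l :=
        limsup_const_add l _ _ (by isBoundedDefault) (by isBoundedDefault)

lemma eq_zero_of_le_mul_dyadicMesh_rpow {x c : ℝ≥0∞} (hT : 0 < T) (hr : 0 < r) (hc : c ≠ ⊤)
    (h : ∀ j, x ≤ ENNReal.ofReal (dyadicMesh T j ^ r) * c) : x = 0 := by
  have hlim : Tendsto (fun j => ENNReal.ofReal (dyadicMesh T j ^ r) * c) atTop (𝓝 0) := by
    simpa using ENNReal.Tendsto.mul_const (ENNReal.tendsto_ofReal (tendsto_dyadicMesh_rpow hT hr))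
      (Or.inr hc)
  exact le_antisymm (ge_of_tendsto' hlim h) bot_le

lemma lpSupNorm_le_sum_add (hT : 0 < T) (hp : 1 ≤ p) (hr : 0 ≤ r) {X : ℝ → Ω → E}
    (hX : ∀ t ∈ Icc 0 T, AEStronglyMeasurable (X t) P) (j : ℕ) :
    lpSupNorm P T p X
      ≤ ∑ k ∈ Finset.range (2 ^ j + 1), eLpNorm (X (k * dyadicMesh T j)) (ENNReal.ofReal p) P
        + ENNReal.ofReal (dyadicMesh T j ^ r) * lpHolderSemi P T p r X := by
  refine iSup₂_le fun t ht => ?_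
  set u := (dyadicFloor T t j : ℝ) * dyadicMesh T j
  have hu : u ∈ Icc 0 T := dyadicFloor_mul_mem hT ht j
  have hdist : |t - u| ≤ dyadicMesh T j := by
    have := sub_lt_dyadicFloor_mul (t := t) hT j
    have := dyadicFloor_mul_le hT ht.1 j
    have := dyadicMesh_pos hT j
    exact abs_sub_le_iff.2 ⟨by linarith, by linarith⟩
  calc eLpNorm (X t) (ENNReal.ofReal p) P
      = eLpNorm (X u + fun ω => X t ω - X u ω) (ENNReal.ofReal p) P := by
        congr; ext ω; simp
    _ ≤ eLpNorm (X u) (ENNReal.ofReal p) P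
        + eLpNorm (fun ω => X t ω - X u ω) (ENNReal.ofReal p) P :=
        eLpNorm_add_le (hX u hu) ((hX t ht).sub (hX u hu)) (ENNReal.one_le_ofReal.2 hp)
    _ ≤ _ := by
        gcongr
        · exact Finset.single_le_sum (f := fun k : ℕ => eLpNorm (X (k * dyadicMesh T j))
            (ENNReal.ofReal p) P) (fun _ _ => bot_le)
            (Finset.mem_range_succ_iff.2 (dyadicFloor_le hT ht.2 j))
        · rw [mul_comm]
          have := Real.rpow_le_rpow (abs_nonneg _) hdist hr
          refine (eLpNorm_sub_le_lpHolderSemi_mul (r := r) ht hu).trans ?_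
          gcongr

lemma tendsto_lpSupNorm_zero (hT : 0 < T) (hp : 1 ≤ p) (hr : 0 < r) {X : ι → ℝ → Ω → E}
    (hX : ∀ i, ∀ t ∈ Icc 0 T, AEStronglyMeasurable (X i t) P)
    (hbdd : limsup (fun i => lpHolderSemi P T p r (X i)) l ≠ ⊤)
    (hconv : ∀ t ∈ Icc 0 T, Tendsto (fun i => eLpNorm (X i t) (ENNReal.ofReal p) P) l (𝓝 0)) :
    Tendsto (fun i => lpSupNorm P T p (X i)) l (𝓝 0) := by
  refine tendsto_of_le_liminf_of_limsup_le bot_le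
    (eq_zero_of_le_mul_dyadicMesh_rpow hT hr hbdd fun j => ?_).le
  have hgrid : Tendsto (fun i => ∑ k ∈ Finset.range (2 ^ j + 1),
      eLpNorm (X i (k * dyadicMesh T j)) (ENNReal.ofReal p) P) l (𝓝 0) := by
    simpa using tendsto_finsetSum _ fun k hk =>
      hconv _ (natCast_mul_dyadicMesh_mem hT.le (Finset.mem_range_succ_iff.1 hk))
  calc limsup (fun i => lpSupNorm P T p (X i)) l
      ≤ limsup (fun i => ∑ k ∈ Finset.range (2 ^ j + 1),
          eLpNorm (X i (k * dyadicMesh T j)) (ENNReal.ofReal p) P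
            + ENNReal.ofReal (dyadicMesh T j ^ r) * lpHolderSemi P T p r (X i)) l :=
        limsup_le_limsup (Eventually.of_forall fun i => lpSupNorm_le_sum_add hT hp hr.le (hX i) j)
    _ = ENNReal.ofReal (dyadicMesh T j ^ r) * limsup (fun i => lpHolderSemi P T p r (X i)) l :=
        (ENNReal.limsup_add_of_left_tendsto_zero hgrid _).trans
          (ENNReal.limsup_const_mul_of_ne_top ofReal_ne_top)

lemma lpHolderSemi_le_interpolate (hp : 1 ≤ p) (hα : 0 ≤ α) (hαβ : α ≤ β) {X : ℝ → Ω → E}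
    (hX : ∀ t ∈ Icc 0 T, AEStronglyMeasurable (X t) P) {δ : ℝ} (hδ : 0 < δ) :
    lpHolderSemi P T p α X
      ≤ ENNReal.ofReal (δ ^ (β - α)) * lpHolderSemi P T p β X
        + ENNReal.ofReal (δ ^ (-α)) * (2 * lpSupNorm P T p X) := by
  refine lpHolderSemi_le_of_forall fun s hs t ht hst => ?_
  have hr : 0 < |s - t| := abs_pos.2 (sub_ne_zero.2 hst)
  rcases le_total |s - t| δ with hle | hle
  · have hsplit : |s - t| ^ β = |s - t| ^ (β - α) * |s - t| ^ α := by
      rw [← Real.rpow_add hr, sub_add_cancel]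
    calc eLpNorm (fun ω => X s ω - X t ω) (ENNReal.ofReal p) P
        ≤ lpHolderSemi P T p β X * ENNReal.ofReal (|s - t| ^ β) :=
          eLpNorm_sub_le_lpHolderSemi_mul hs ht
      _ = lpHolderSemi P T p β X * ENNReal.ofReal (|s - t| ^ (β - α))
            * ENNReal.ofReal (|s - t| ^ α) := by
          rw [hsplit, ENNReal.ofReal_mul (by positivity), mul_assoc]
      _ ≤ lpHolderSemi P T p β X * ENNReal.ofReal (δ ^ (β - α))
            * ENNReal.ofReal (|s - t| ^ α) := by
          have := Real.rpow_le_rpow hr.le hle (sub_nonneg.2 hαβ)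
          gcongr
      _ ≤ _ := by rw [mul_comm (lpHolderSemi _ _ _ _ _)]; gcongr; exact le_self_add
  · calc eLpNorm (fun ω => X s ω - X t ω) (ENNReal.ofReal p) P
        ≤ eLpNorm (X s) (ENNReal.ofReal p) P + eLpNorm (X t) (ENNReal.ofReal p) P :=
          eLpNorm_sub_le (hX s hs) (hX t ht) (ENNReal.one_le_ofReal.2 hp)
      _ ≤ 2 * lpSupNorm P T p X := by
          rw [two_mul]; exact add_le_add (eLpNorm_le_lpSupNorm hs) (eLpNorm_le_lpSupNorm ht)
      _ ≤ ENNReal.ofReal (δ ^ (-α)) * (2 * lpSupNorm P T p X) * ENNReal.ofReal (|s - t| ^ α) := by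
          rw [mul_right_comm, ← ENNReal.ofReal_mul (by positivity)]
          refine le_mul_of_one_le_left bot_le (ENNReal.one_le_ofReal.2 ?_)
          rw [Real.rpow_neg hδ.le, inv_mul_eq_div, one_le_div (by positivity)]
          exact Real.rpow_le_rpow hδ.le hle hα
      _ ≤ _ := by gcongr; exact le_add_self

lemma tendsto_lpHolderSemi_zero (hT : 0 < T) (hp : 1 ≤ p) (hα : 0 ≤ α) (hαβ : α < β)
    {X : ι → ℝ → Ω → E} (hX : ∀ i, ∀ t ∈ Icc 0 T, AEStronglyMeasurable (X i t) P)
    (hbdd : limsup (fun i => lpHolderSemi P T p β (X i)) l ≠ ⊤)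
    (hsup : Tendsto (fun i => lpSupNorm P T p (X i)) l (𝓝 0)) :
    Tendsto (fun i => lpHolderSemi P T p α (X i)) l (𝓝 0) := by
  refine tendsto_of_le_liminf_of_limsup_le bot_le
    (eq_zero_of_le_mul_dyadicMesh_rpow hT (sub_pos.2 hαβ) hbdd fun j => ?_).le
  have hδ := dyadicMesh_pos hT j
  have hrest : Tendsto (fun i => ENNReal.ofReal (dyadicMesh T j ^ (-α))
      * (2 * lpSupNorm P T p (X i))) l (𝓝 0) := by
    simpa using ENNReal.Tendsto.const_mul (ENNReal.Tendsto.const_mul hsup (Or.inr ofNat_ne_top))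
      (Or.inr ofReal_ne_top)
  calc limsup (fun i => lpHolderSemi P T p α (X i)) l
      ≤ limsup (fun i => ENNReal.ofReal (dyadicMesh T j ^ (β - α)) * lpHolderSemi P T p β (X i)
          + ENNReal.ofReal (dyadicMesh T j ^ (-α)) * (2 * lpSupNorm P T p (X i))) l :=
        limsup_le_limsup (Eventually.of_forall fun i =>
          lpHolderSemi_le_interpolate hp hα hαβ.le (hX i) hδ)
    _ = ENNReal.ofReal (dyadicMesh T j ^ (β - α))
          * limsup (fun i => lpHolderSemi P T p β (X i)) l :=
        (ENNReal.limsup_add_of_right_tendsto_zero hrest _).trans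
          (ENNReal.limsup_const_mul_of_ne_top ofReal_ne_top)

theorem tendsto_lpHolderNorm_zero (hT : 0 < T) (hp : 1 ≤ p) (hα : 0 ≤ α) (hαβ : α < β)
    {X : ι → ℝ → Ω → E} (hX : ∀ i, ∀ t ∈ Icc 0 T, AEStronglyMeasurable (X i t) P)
    (hbdd : limsup (fun i => lpHolderSemi P T p β (X i)) l ≠ ⊤)
    (hconv : ∀ t ∈ Icc 0 T, Tendsto (fun i => eLpNorm (X i t) (ENNReal.ofReal p) P) l (𝓝 0)) :
    Tendsto (fun i => lpHolderNorm P T p α (X i)) l (𝓝 0) := by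
  have hsup := tendsto_lpSupNorm_zero hT hp (hα.trans_lt hαβ) hX hbdd hconv
  have h := hsup.add (tendsto_lpHolderSemi_zero hT hp hα hαβ hX hbdd hsup)
  rw [add_zero] at h
  exact h

end Convergence

theorem cor_hoelder23_general
    {Ω E : Type} [MeasurableSpace Ω] [NormedAddCommGroup E]
    (T : ℝ) (hT : 0 < T) (p : ℝ) (hp : 1 ≤ p) (β : ℝ)
    (P : Measure Ω)
    (Y : ℕ → ℝ → Ω → E)
    (hYmeas : ∀ N, ∀ t ∈ Set.Icc (0:ℝ) T, StronglyMeasurable (Y N t))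
    (hYcont : ∀ N ω, ContinuousOn (fun t => Y N t ω) (Set.Icc (0:ℝ) T))
    (hbdd : limsup (fun N => lpHolderSemi P T p β (Y N)) atTop < ⊤)
    (hconv : ∀ t ∈ Set.Icc (0:ℝ) T,
        limsup (fun N =>
            eLpNorm (fun ω => Y 0 t ω - Y N t ω) (ENNReal.ofReal p) P) atTop
          = 0) :
    (lpHolderSemi P T p β (Y 0)
        ≤ limsup (fun N => lpHolderSemi P T p β (Y N)) atTop
      ∧ limsup (fun N => lpHolderSemi P T p β (Y N)) atTop < ⊤)
    ∧
    (∀ α ∈ Set.Icc (0:ℝ) 1, α < β →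
      limsup (fun N =>
          lpHolderNorm P T p α (fun t ω => Y 0 t ω - Y N t ω)) atTop = 0)
    ∧
    (∀ α ∈ Set.Icc (0:ℝ) 1, α < β - 1 / p →
      limsup (fun N =>
          lpOfHolderNorm P T p α (fun t ω => Y 0 t ω - Y N t ω)) atTop = 0) := by
  have hY : ∀ N, ∀ t ∈ Icc 0 T, AEStronglyMeasurable (Y N t) P :=
    fun N t ht => (hYmeas N t ht).aestronglyMeasurable
  have hD : ∀ N, ∀ t ∈ Icc 0 T, AEStronglyMeasurable (fun ω => Y 0 t ω - Y N t ω) P :=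
    fun N t ht => (hY 0 t ht).sub (hY N t ht)
  have hDconv : ∀ t ∈ Icc 0 T, Tendsto
      (fun N => eLpNorm (fun ω => Y 0 t ω - Y N t ω) (ENNReal.ofReal p) P) atTop (𝓝 0) :=
    fun t ht => tendsto_of_le_liminf_of_limsup_le bot_le (hconv t ht).le
  have hlower := lpHolderSemi_le_limsup (r := β) hp (hY 0) hY hDconv
  have hDbdd := limsup_lpHolderSemi_sub_ne_top hp (hY 0) hY (hlower.trans_lt hbdd).ne hbdd.ne
  have hnorm : ∀ {b}, 0 ≤ b → b < β → Tendsto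
      (fun N => lpHolderNorm P T p b (fun t ω => Y 0 t ω - Y N t ω)) atTop (𝓝 0) :=
    fun hb hbβ => tendsto_lpHolderNorm_zero hT hp hb hbβ hD hDbdd hDconv
  refine ⟨⟨hlower, hbdd⟩, fun α hα hαβ => (hnorm hα.1 hαβ).limsup_eq, fun α hα hαβ => ?_⟩
  obtain ⟨b, hαb, hbβ⟩ := exists_between (lt_sub_iff_add_lt.1 hαβ)
  obtain ⟨C, hC, hKol⟩ := lpOfHolderNorm_le_mul_lpHolderNorm (E := E) P hT hp hα.1 hαb
  have hb : 0 ≤ b := by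
    have : 0 < 1 / p := by positivity
    linarith [hα.1]
  refine Tendsto.limsup_eq <| tendsto_of_tendsto_of_tendsto_of_le_of_le tendsto_const_nhds
    (by simpa using ENNReal.Tendsto.const_mul (hnorm hb hbβ) (Or.inr hC)) (fun _ => bot_le)
    fun N => hKol _ (hD N) fun ω => (hYcont 0 ω).sub (hYcont N ω)

/-- **Corollary 2.10** (`L^p`-convergence in Hölder norms for a fixed `p`). -/
theorem cor_hoelder23
    {Ω E : Type} [MeasurableSpace Ω] [NormedAddCommGroup E] [NormedSpace ℝ E]
    [CompleteSpace E]
    (T : ℝ) (hT : 0 < T) (p : ℝ) (hp : 1 ≤ p) (β : ℝ) (hβ : β ∈ Set.Icc (0:ℝ) 1)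
    (P : Measure Ω) [IsProbabilityMeasure P]
    (Y : ℕ → ℝ → Ω → E)
    (hYmeas : ∀ N, ∀ t ∈ Set.Icc (0:ℝ) T, StronglyMeasurable (Y N t))
    (hYcont : ∀ N ω, ContinuousOn (fun t => Y N t ω) (Set.Icc (0:ℝ) T))
    (hbdd : limsup (fun N => lpHolderSemi P T p β (Y N)) atTop < ⊤)
    (hconv : ∀ t ∈ Set.Icc (0:ℝ) T,
        limsup (fun N =>
            eLpNorm (fun ω => Y 0 t ω - Y N t ω) (ENNReal.ofReal p) P) atTop
          = 0) :
    (lpHolderSemi P T p β (Y 0)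
        ≤ limsup (fun N => lpHolderSemi P T p β (Y N)) atTop
      ∧ limsup (fun N => lpHolderSemi P T p β (Y N)) atTop < ⊤)
    ∧
    (∀ α ∈ Set.Icc (0:ℝ) 1, α < β →
      limsup (fun N =>
          lpHolderNorm P T p α (fun t ω => Y 0 t ω - Y N t ω)) atTop = 0)
    ∧
    (∀ α ∈ Set.Icc (0:ℝ) 1, α < β - 1 / p →
      limsup (fun N =>
          lpOfHolderNorm P T p α (fun t ω => Y 0 t ω - Y N t ω)) atTop = 0) :=
  cor_hoelder23_general T hT p hp β P Y hYmeas hYcont hbdd hconv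
end
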